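/- arXiv:2108.11424 — 3 statements merged into one kernel-verified Lean document; each statement's English description precedes it below -/
import Mathlib

section
/- Let 𝐏 be a probability measure on environments on ℤ² satisfying (C1), (C2), and (C3), and let ℓ be a unit vector in ℝ². Then P⁰(T_{<0} = ∞) ≤ P⁰(B_ℓ) ≤ P⁰(A_ℓ), and consequently P⁰(A_ℓ) > 0 if and only if P⁰(B_ℓ) > 0. -/
open MeasureTheory ProbabilityTheory Filter Topology

noncomputable section

/-- Vertices of `ℤ^d`. -/
abbrev Zd (d : ℕ) := Fin d → ℤ

/-- Trajectories of a walk on `ℤ^d`. -/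
abbrev Traj (d : ℕ) := ℕ → Zd d

/-- Embedding of `ℤ^d` into Euclidean `ℝ^d`. -/
def toE {d : ℕ} (x : Zd d) : EuclideanSpace ℝ (Fin d) := WithLp.toLp 2 (fun i => (x i : ℝ))

/-- Dot product of a lattice point with a real vector. -/
def dotl {d : ℕ} (x : Zd d) (ℓ : EuclideanSpace ℝ (Fin d)) : ℝ := ∑ i, (x i : ℝ) * ℓ i

/-- The space of environments on `ℤ^d`. -/
abbrev EnvSp (d : ℕ) :=
  {ω : Zd d → Zd d → ℝ // (∀ x y, 0 ≤ ω x y) ∧ ∀ x, HasSum (ω x) 1}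

/-- `κ x ω` is the quenched law `P_ω^x` of the walk started at `x` in the environment `ω`,
characterized by its cylinder probabilities. -/
def IsQuenched {d : ℕ} (κ : Zd d → Kernel (EnvSp d) (Traj d)) : Prop :=
  ∀ (x : Zd d) (ω : EnvSp d) (n : ℕ) (p : ℕ → Zd d),
    (κ x) ω {X | ∀ i ≤ n, X i = p i} =
      (if p 0 = x then 1 else 0) *
        ∏ i ∈ Finset.range n, ENNReal.ofReal (ω.1 (p i) (p (i + 1)))

/-- The annealed law `P^x`. -/
def ann {d : ℕ} (P : Measure (EnvSp d)) (κ : Zd d → Kernel (EnvSp d) (Traj d))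
    (x : Zd d) : Measure (Traj d) :=
  P.bind fun ω => (κ x) ω

/-- The annealed law `P^{a,b}` of two walks moving independently in a common environment. -/
def annPair {d : ℕ} (P : Measure (EnvSp d)) (κ : Zd d → Kernel (EnvSp d) (Traj d))
    (a b : Zd d) : Measure (Traj d × Traj d) :=
  P.bind fun ω => ((κ a) ω).prod ((κ b) ω)

/-- (C1): the transition probability vectors at the various sites are i.i.d. -/
def CondC1 {d : ℕ} (P : Measure (EnvSp d)) : Prop :=
  iIndepFun
    (fun x (ω : EnvSp d) => fun y : Zd d => ω.1 x (x + y)) P ∧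
  ∀ x : Zd d,
    IdentDistrib (fun ω : EnvSp d => fun y : Zd d => ω.1 x (x + y))
      (fun ω : EnvSp d => fun y : Zd d => ω.1 0 (0 + y)) P P

/-- (C2): jumps are bounded by `R`. -/
def CondC2 {d : ℕ} (P : Measure (EnvSp d)) (R : ℝ) : Prop :=
  0 < R ∧ ∀ᵐ ω ∂P, ∀ x y : Zd d, R < ‖toE x - toE y‖ → ω.1 x y = 0

/-- (C3): a generating set of steps that are a.s. available. -/
def CondC3 {d : ℕ} (P : Measure (EnvSp d)) : Prop :=
  ∃ N : Set (Zd d), AddSubmonoid.closure N = ⊤ ∧ ∀ y ∈ N, P {ω | 0 < ω.1 0 y} = 1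

/-- The event `A_ℓ` of transience in direction `ℓ`. -/
def Adir {d : ℕ} (ℓ : EuclideanSpace ℝ (Fin d)) : Set (Traj d) :=
  {X | Tendsto (fun n => dotl (X n) ℓ) atTop atTop}

/-- The event `A_{-ℓ}`. -/
def AdirNeg {d : ℕ} (ℓ : EuclideanSpace ℝ (Fin d)) : Set (Traj d) :=
  {X | Tendsto (fun n => dotl (X n) ℓ) atTop atBot}

/-- First hitting time of a set, valued in `ℕ∞`. -/
def hitTime {α : Type*} (A : Set α) (X : ℕ → α) : ℕ∞ :=
  ⨅ (k : ℕ) (_ : X k ∈ A), (k : ℕ∞)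

/-- `T_{<a}` (with respect to direction `ℓ`). -/
def Tlt {d : ℕ} (ℓ : EuclideanSpace ℝ (Fin d)) (a : ℝ) : Traj d → ℕ∞ :=
  hitTime {x | dotl x ℓ < a}

/-- `T_{≤a}`. -/
def Tle {d : ℕ} (ℓ : EuclideanSpace ℝ (Fin d)) (a : ℝ) : Traj d → ℕ∞ :=
  hitTime {x | dotl x ℓ ≤ a}

/-- `T_{>a}`. -/
def Tgt {d : ℕ} (ℓ : EuclideanSpace ℝ (Fin d)) (a : ℝ) : Traj d → ℕ∞ :=
  hitTime {x | a < dotl x ℓ}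

/-- `T_{≥a}`. -/
def Tge {d : ℕ} (ℓ : EuclideanSpace ℝ (Fin d)) (a : ℝ) : Traj d → ℕ∞ :=
  hitTime {x | a ≤ dotl x ℓ}

/-- `Y` is obtained from `X` by erasing a single loop. -/
def EraseOne {α : Type*} (X Y : ℕ → α) : Prop :=
  ∃ m n : ℕ, m < n ∧ X m = X n ∧ Y = fun i => if i < m then X i else X (i + (n - m))

/-- `ℰ(X)`: all paths obtained from `X` by erasing finitely many loops in any order. -/
def LoopErasures {α : Type*} (X : ℕ → α) : Set (ℕ → α) :=
  {Y | Relation.ReflTransGen EraseOne X Y}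

/-- The event `B_ℓ`. -/
def Bdir {d : ℕ} (ℓ : EuclideanSpace ℝ (Fin d)) : Set (Traj d) :=
  {X | ∃ Y ∈ LoopErasures X, Tlt ℓ 0 Y = ⊤}

/-- The path `X` stopped at the (possibly infinite) time `T`;
for `n ≥ T` it stays at `X_T`. -/
def stopped {α : Type*} (X : ℕ → α) (T : ℕ∞) : ℕ → α :=
  fun n => if (n : ℕ∞) < T then X n else X T.toNat

/-- The event `G_a^b` (for `a < b` it uses `T_{≥b}`, for `a > b` it uses `T_{≤b}`). -/
def Gset {d : ℕ} (ℓ : EuclideanSpace ℝ (Fin d)) (a b : ℝ) : Set (Traj d) :=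
  if a < b then
    {X | Tge ℓ b X ≠ ⊤ ∧
      ∃ Y ∈ LoopErasures (stopped X (Tge ℓ b X)), Tge ℓ b Y < Tlt ℓ a Y}
  else
    {X | Tle ℓ b X ≠ ⊤ ∧
      ∃ Y ∈ LoopErasures (stopped X (Tle ℓ b X)), Tle ℓ b Y < Tgt ℓ a Y}

/-!
The first inequality is the inclusion `{T_{<0} = ∞} ⊆ B_ℓ`.

For the second, a loop erasure of `X` is eventually a time shift of `X`, so on `B_ℓ` the
projection `X_n ⬝ ℓ` is eventually nonnegative. By (C3) some a.s. available step `e` has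
`e ⬝ ℓ < 0`. If `X_n ⬝ ℓ` does not tend to `+∞`, it lies below some rational level `b` infinitely
often, so either some site below `b` is visited infinitely often, or infinitely many sites below
`b` are visited for the first time. In the first case the quenched walk leaves that site by `e`
infinitely often, since `ω(y, y + e) > 0`; in the second the annealed walk meets a fresh, hence
independent, transition vector at every first visit, and takes the step `e` with probability
`E[ω(0, e)] > 0`. Both are instances of a conditional Borel–Cantelli lemma, and either way the
walk is infinitely often below `b - |e ⬝ ℓ|`; iterating contradicts eventual nonnegativity.

For the equivalence, on `A_ℓ` the projection attains its minimum at some time `t` and site `z`.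
Summing over the path up to time `t` (total quenched weight at most one) and using the
translation invariance of the annealed path weights given by (C1), this has probability at most
`P⁰(T_{<0} = ∞)`.
-/

open scoped ENNReal

section PathSpace

variable {α : Type*}

def stopAt (m : ℕ) (X : ℕ → α) : ℕ → α := fun i => X (min i m)

/-- A path stopped at time `m` encodes its prefix `w 0, …, w m`. -/
def IsStoppedAt (m : ℕ) (w : ℕ → α) : Prop := stopAt m w = w

def pathCyl (m : ℕ) (w : ℕ → α) : Set (ℕ → α) := {X | ∀ i ≤ m, X i = w i}

def DependsOnPast (Q : ℕ → (ℕ → α) → Prop) : Prop := ∀ m X, Q m (stopAt m X) ↔ Q m X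

lemma stopAt_apply_of_le {m i : ℕ} (X : ℕ → α) (h : i ≤ m) : stopAt m X i = X i := by
  simp [stopAt, min_eq_left h]

lemma stopAt_stopAt_of_le {k m : ℕ} (X : ℕ → α) (h : k ≤ m) :
    stopAt k (stopAt m X) = stopAt k X := by
  funext i
  simp only [stopAt, min_assoc, min_eq_left h]

lemma isStoppedAt_stopAt (m : ℕ) (X : ℕ → α) : IsStoppedAt m (stopAt m X) :=
  stopAt_stopAt_of_le X le_rfl

lemma mem_pathCyl_iff {m : ℕ} {w X : ℕ → α} (hw : IsStoppedAt m w) :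
    X ∈ pathCyl m w ↔ stopAt m X = w := by
  refine ⟨fun hX => ?_, fun hX i hi => ?_⟩
  · rw [← hw]
    funext i
    exact hX _ (min_le_right i m)
  · rw [← hX, stopAt_apply_of_le X hi]

lemma mem_pathCyl_stopAt (m : ℕ) (X : ℕ → α) : X ∈ pathCyl m (stopAt m X) :=
  (mem_pathCyl_iff (isStoppedAt_stopAt m X)).2 rfl

lemma disjoint_pathCyl {m : ℕ} {w w' : ℕ → α} (hw : IsStoppedAt m w) (hw' : IsStoppedAt m w')
    (hne : w ≠ w') : Disjoint (pathCyl m w) (pathCyl m w') :=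
  Set.disjoint_left.2 fun _ hX hX' =>
    hne (((mem_pathCyl_iff hw).1 hX).symm.trans ((mem_pathCyl_iff hw').1 hX'))

lemma pairwise_disjoint_pathCyl {m : ℕ} {U : Set (ℕ → α)} (hU : ∀ u ∈ U, IsStoppedAt m u) :
    Pairwise (Function.onFun Disjoint fun u : U => pathCyl m u.1) :=
  fun u u' hne => disjoint_pathCyl (hU _ u.2) (hU _ u'.2) (Subtype.coe_injective.ne hne)

lemma dependsOnPast_apply_eq (y : α) : DependsOnPast fun n (X : ℕ → α) => X n = y :=
  fun n X => by
    change stopAt n X n = y ↔ X n = y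
    rw [stopAt_apply_of_le X le_rfl]

lemma countable_setOf_isStoppedAt [Countable α] (m : ℕ) :
    {w : ℕ → α | IsStoppedAt m w}.Countable := by
  refine (Set.countable_range fun (v : Fin (m + 1) → α) (i : ℕ) =>
    v ⟨min i m, Nat.lt_succ_of_le (min_le_right i m)⟩).mono fun w (hw : stopAt m w = w) => ?_
  exact ⟨fun j => w j, hw⟩

def extendPath (m : ℕ) (w : ℕ → α) (z : α) : ℕ → α := fun i => if i ≤ m then w i else z

lemma pathCyl_inter_eq_extendPath (m : ℕ) (w : ℕ → α) (z : α) :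
    pathCyl m w ∩ {X | X (m + 1) = z} = pathCyl (m + 1) (extendPath m w z) := by
  ext X
  simp only [pathCyl, extendPath, Set.mem_inter_iff, Set.mem_ofPred_eq]
  refine ⟨fun ⟨hX, hz⟩ i hi => ?_, fun hX => ⟨fun i hi => ?_, ?_⟩⟩
  · split_ifs with him
    · exact hX i him
    · rwa [show i = m + 1 by omega]
  · simpa [hi] using hX i (hi.trans m.le_succ)
  · simpa using hX (m + 1) le_rfl

variable [MeasurableSpace α] [MeasurableSingletonClass α]

lemma measurableSet_pathCyl (m : ℕ) (w : ℕ → α) : MeasurableSet (pathCyl m w) := by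
  have : pathCyl m w = ⋂ i ∈ Finset.range (m + 1), (fun X : ℕ → α => X i) ⁻¹' {w i} := by
    ext X
    simp [pathCyl]
  rw [this]
  exact Finset.measurableSet_biInter _ fun i _ => measurable_pi_apply i (measurableSet_singleton _)

lemma measurableSet_setOf_apply_eq (n : ℕ) (y : α) : MeasurableSet {X : ℕ → α | X n = y} :=
  (measurableSet_singleton y).preimage (measurable_pi_apply n)

end PathSpace

section Chances

variable {α : Type*} {Q : ℕ → (ℕ → α) → Prop} {g : α → α}

def chances (Q : ℕ → (ℕ → α) → Prop) (N : ℕ) (X : ℕ → α) (n : ℕ) : Prop := N ≤ n ∧ Q n X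

open Classical in
/-- Chances are numbered from `0`: `j` is the number of chances before `m`. -/
def IsChanceAfterFailures (Q : ℕ → (ℕ → α) → Prop) (g : α → α) (N j m : ℕ) (X : ℕ → α) : Prop :=
  chances Q N X m ∧ Nat.count (chances Q N X) m = j ∧
    ∀ n < m, chances Q N X n → X (n + 1) ≠ g (X n)

lemma dependsOnPast_isChanceAfterFailures (hQ : DependsOnPast Q) (N j : ℕ) :
    DependsOnPast (IsChanceAfterFailures Q g N j) := by
  classical
  intro m X
  have hQm : ∀ n ≤ m, chances Q N (stopAt m X) n ↔ chances Q N X n := fun n hn => by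
    rw [chances, chances, ← hQ n, stopAt_stopAt_of_le X hn, hQ]
  have hcount : Nat.count (chances Q N (stopAt m X)) m = Nat.count (chances Q N X) m := by
    simp only [Nat.count_eq_card_filter_range]
    exact congrArg Finset.card <| Finset.filter_congr fun n hn =>
      hQm n (Finset.mem_range.1 hn).le
  unfold IsChanceAfterFailures
  rw [hcount, hQm m le_rfl]
  refine and_congr_right fun _ => and_congr_right fun _ => forall₂_congr fun n hn => ?_
  rw [hQm n hn.le, stopAt_apply_of_le X hn, stopAt_apply_of_le X hn.le]

lemma IsChanceAfterFailures.unique {N j m m' : ℕ} {X : ℕ → α}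
    (h : IsChanceAfterFailures Q g N j m X) (h' : IsChanceAfterFailures Q g N j m' X) :
    m = m' := by
  classical
  by_contra hne
  rcases Nat.lt_or_gt_of_ne hne with hlt | hlt
  · exact (Nat.count_strict_mono h.1 hlt).ne (h.2.1.trans h'.2.1.symm)
  · exact (Nat.count_strict_mono h'.1 hlt).ne (h'.2.1.trans h.2.1.symm)

lemma IsChanceAfterFailures.exists_prev {N j m : ℕ} {X : ℕ → α}
    (h : IsChanceAfterFailures Q g N (j + 1) m X) :
    ∃ m', IsChanceAfterFailures Q g N j m' X ∧ X (m' + 1) ≠ g (X m') := by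
  classical
  obtain ⟨-, hcount, hfail⟩ := h
  have hcard : ∀ hf : (Set.ofPred (chances Q N X)).Finite, j < hf.toFinset.card :=
    fun hf => (hcount ▸ Nat.count_le_card hf m : j + 1 ≤ _)
  have hlt : Nat.nth (chances Q N X) j < m := Nat.nth_lt_of_lt_count (by omega)
  have hmem := Nat.nth_mem j hcard
  exact ⟨_, ⟨hmem, Nat.count_nth hcard, fun n hn => hfail n (hn.trans hlt)⟩, hfail _ hlt hmem⟩

lemma setOf_frequently_not_step_subset :
    {X : ℕ → α | (∃ᶠ n in atTop, Q n X) ∧ ¬∃ᶠ n in atTop, Q n X ∧ X (n + 1) = g (X n)} ⊆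
      ⋃ N, ⋂ j, {X | ∃ m, IsChanceAfterFailures Q g N j m X ∧ X (m + 1) ≠ g (X m)} := by
  classical
  rintro X ⟨hfreq, hnot⟩
  obtain ⟨N, hN⟩ := eventually_atTop.1 (not_frequently.1 hnot)
  have hinf : (Set.ofPred (chances Q N X)).Infinite := Nat.frequently_atTop_iff_infinite.1 <|
    (hfreq.and_eventually (eventually_ge_atTop N)).mono fun n h => ⟨h.2, h.1⟩
  refine Set.mem_iUnion.2 ⟨N, Set.mem_iInter.2 fun j =>
    ⟨Nat.nth (chances Q N X) j, ⟨?_, ?_, ?_⟩, ?_⟩⟩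
  · exact Nat.nth_mem_of_infinite hinf j
  · exact Nat.count_nth_of_infinite hinf j
  · exact fun n _ hn hstep => hN n hn.1 ⟨hn.2, hstep⟩
  · exact fun hstep => hN _ (Nat.nth_mem_of_infinite hinf j).1
      ⟨(Nat.nth_mem_of_infinite hinf j).2, hstep⟩

end Chances

section ConditionalBorelCantelli

variable {Ω : Type*} [MeasurableSpace Ω]

lemma measure_sdiff_le_one_sub_mul (μ : Measure Ω) [IsFiniteMeasure μ] {C S : Set Ω}
    (hC : MeasurableSet C) (hS : MeasurableSet S) {ε : ℝ≥0∞} (h : ε * μ C ≤ μ (C ∩ S)) :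
    μ (C \ S) ≤ (1 - ε) * μ C := by
  rw [← Set.sdiff_self_inter, measure_sdiff Set.inter_subset_left (hC.inter hS).nullMeasurableSet
    (measure_ne_top _ _), ENNReal.sub_mul fun _ _ => measure_ne_top _ _, one_mul]
  exact tsub_le_tsub_left h _

variable {α : Type*} [MeasurableSpace α] [MeasurableSingletonClass α] [Countable α]
  (μ : Measure (ℕ → α)) (g : α → α) {ε : ℝ≥0∞}

lemma measure_stop_not_step_le [IsFiniteMeasure μ] {τ : ℕ → (ℕ → α) → Prop}
    (hτ : DependsOnPast τ) (hτ_unique : ∀ X m m', τ m X → τ m' X → m = m')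
    (H : ∀ m w, IsStoppedAt m w → τ m w →
      ε * μ (pathCyl m w) ≤ μ (pathCyl m w ∩ {X | X (m + 1) = g (w m)})) :
    μ {X | ∃ m, τ m X ∧ X (m + 1) ≠ g (X m)} ≤ (1 - ε) * μ {X | ∃ m, τ m X} := by
  set I := {p : ℕ × (ℕ → α) | IsStoppedAt p.1 p.2 ∧ τ p.1 p.2}
  have : Countable I := by
    refine Set.Countable.to_subtype <| (Set.countable_iUnion fun m =>
      (countable_setOf_isStoppedAt (α := α) m).image (m, ·)).mono fun p hp => ?_
    exact Set.mem_iUnion.2 ⟨p.1, ⟨p.2, hp.1, rfl⟩⟩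
  have mem_iff : ∀ (p : I) X, X ∈ pathCyl p.1.1 p.1.2 ↔ stopAt p.1.1 X = p.1.2 :=
    fun p _ => mem_pathCyl_iff p.2.1
  have hdisj : Pairwise (Function.onFun Disjoint fun p : I => pathCyl p.1.1 p.1.2) := by
    intro p q hpq
    refine Set.disjoint_left.2 fun X hXp hXq => hpq ?_
    rw [mem_iff] at hXp hXq
    have hm : p.1.1 = q.1.1 := hτ_unique X _ _ ((hτ _ X).1 (hXp ▸ p.2.2))
      ((hτ _ X).1 (hXq ▸ q.2.2))
    exact Subtype.ext (Prod.ext hm (hXp.symm.trans (hm ▸ hXq)))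
  have hcover : ∀ X, (∃ m, τ m X) ↔ ∃ p : I, X ∈ pathCyl p.1.1 p.1.2 := by
    intro X
    constructor
    · rintro ⟨m, hm⟩
      exact ⟨⟨(m, stopAt m X), isStoppedAt_stopAt m X, (hτ m X).2 hm⟩, mem_pathCyl_stopAt m X⟩
    · rintro ⟨p, hp⟩
      exact ⟨p.1.1, (hτ _ X).1 (((mem_iff p X).1 hp).symm ▸ p.2.2)⟩
  have hunion : {X | ∃ m, τ m X} = ⋃ p : I, pathCyl p.1.1 p.1.2 := by
    ext X
    simpa using hcover X
  have hunion_fail : {X | ∃ m, τ m X ∧ X (m + 1) ≠ g (X m)} =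
      ⋃ p : I, pathCyl p.1.1 p.1.2 \ {X | X (p.1.1 + 1) = g (p.1.2 p.1.1)} := by
    ext X
    simp only [Set.mem_ofPred_eq, Set.mem_iUnion, Set.mem_sdiff]
    constructor
    · rintro ⟨m, hm, hfail⟩
      obtain ⟨p, hp⟩ := (hcover X).1 ⟨m, hm⟩
      have : p.1.1 = m := hτ_unique X _ _ ((hτ _ X).1 (((mem_iff p X).1 hp).symm ▸ p.2.2)) hm
      subst this
      exact ⟨p, hp, by rwa [← hp p.1.1 le_rfl]⟩
    · rintro ⟨p, hp, hfail⟩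
      exact ⟨p.1.1, (hτ _ X).1 (((mem_iff p X).1 hp).symm ▸ p.2.2), by rwa [hp p.1.1 le_rfl]⟩
  rw [hunion, hunion_fail, measure_iUnion hdisj fun p => measurableSet_pathCyl _ _,
    measure_iUnion (fun p q hpq => (hdisj hpq).mono Set.sdiff_subset Set.sdiff_subset)
      fun p => (measurableSet_pathCyl _ _).diff (measurableSet_setOf_apply_eq _ _),
    ← ENNReal.tsum_mul_left]
  exact ENNReal.tsum_le_tsum fun p => measure_sdiff_le_one_sub_mul μ (measurableSet_pathCyl _ _)
    (measurableSet_setOf_apply_eq _ _) (H _ _ p.2.1 p.2.2)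

variable [IsProbabilityMeasure μ] {Q : ℕ → (ℕ → α) → Prop}

lemma measure_isChanceAfterFailures_not_step_le (hQ : DependsOnPast Q)
    (H : ∀ m w, IsStoppedAt m w → Q m w →
      ε * μ (pathCyl m w) ≤ μ (pathCyl m w ∩ {X | X (m + 1) = g (w m)})) (N j : ℕ) :
    μ {X | ∃ m, IsChanceAfterFailures Q g N j m X ∧ X (m + 1) ≠ g (X m)} ≤ (1 - ε) ^ (j + 1) := by
  have hfail : ∀ j, μ {X | ∃ m, IsChanceAfterFailures Q g N j m X ∧ X (m + 1) ≠ g (X m)} ≤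
      (1 - ε) * μ {X | ∃ m, IsChanceAfterFailures Q g N j m X} := fun j =>
    measure_stop_not_step_le μ g (dependsOnPast_isChanceAfterFailures hQ N j)
      (fun X m m' h h' => h.unique h') fun m w hw h => H m w hw h.1.2
  induction j with
  | zero => simpa using (hfail 0).trans (mul_le_of_le_one_right' prob_le_one)
  | succ j ih =>
    refine (hfail (j + 1)).trans ?_
    rw [pow_succ']
    gcongr
    refine (measure_mono fun X hX => ?_).trans ih
    obtain ⟨m, hm⟩ := hX
    exact hm.exists_prev

/-- A conditional Borel–Cantelli lemma. -/
theorem ae_frequently_step_of_frequently (hQ : DependsOnPast Q) (hε : 0 < ε)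
    (H : ∀ m w, IsStoppedAt m w → Q m w →
      ε * μ (pathCyl m w) ≤ μ (pathCyl m w ∩ {X | X (m + 1) = g (w m)})) :
    ∀ᵐ X ∂μ, (∃ᶠ n in atTop, Q n X) → ∃ᶠ n in atTop, Q n X ∧ X (n + 1) = g (X n) := by
  refine measure_mono_null
    (fun X hX => setOf_frequently_not_step_subset (Classical.not_imp.1 hX)) <|
      measure_iUnion_null fun N => ?_
  have hlim : Tendsto (fun j : ℕ => (1 - ε) ^ (j + 1)) atTop (𝓝 0) :=
    (ENNReal.tendsto_pow_atTop_nhds_zero_of_lt_one (ENNReal.sub_lt_self ENNReal.one_ne_top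
      one_ne_zero hε.ne')).comp (tendsto_add_atTop_nat 1)
  exact le_antisymm (ge_of_tendsto' hlim fun j => (measure_mono (Set.iInter_subset _ j)).trans
    (measure_isChanceAfterFailures_not_step_le μ g hQ H N j)) bot_le

end ConditionalBorelCantelli

section Environment

variable {d : ℕ}

/-- The transition vector at `x`, indexed by the jump; (C1) is a statement about these. -/
def envRow (x : Zd d) (ω : EnvSp d) : Zd d → ℝ := fun y => ω.1 x (x + y)

lemma measurable_env_apply (x y : Zd d) : Measurable fun ω : EnvSp d => ω.1 x y :=
  (measurable_pi_apply y).comp ((measurable_pi_apply x).comp measurable_subtype_coe)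

lemma measurable_envRow (x : Zd d) : Measurable (envRow x) :=
  measurable_pi_lambda _ fun y => measurable_env_apply x (x + y)

def pathWeight (n : ℕ) (v : ℕ → Zd d) (ω : EnvSp d) : ℝ≥0∞ :=
  ∏ i ∈ Finset.range n, ENNReal.ofReal (ω.1 (v i) (v (i + 1)))

lemma measurable_pathWeight (n : ℕ) (v : ℕ → Zd d) : Measurable (pathWeight n v) :=
  Finset.measurable_prod _ fun i _ =>
    ENNReal.measurable_ofReal.comp (measurable_env_apply (v i) (v (i + 1)))

open Classical in
/-- The factor of `pathWeight n v` coming from the steps that leave `x`, as a function of the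
row at `x`. -/
def rowWeight (n : ℕ) (v : ℕ → Zd d) (x : Zd d) (r : Zd d → ℝ) : ℝ≥0∞ :=
  ∏ i ∈ (Finset.range n).filter (fun i => v i = x), ENNReal.ofReal (r (v (i + 1) - v i))

lemma measurable_rowWeight (n : ℕ) (v : ℕ → Zd d) (x : Zd d) : Measurable (rowWeight n v x) :=
  Finset.measurable_prod _ fun _ _ => ENNReal.measurable_ofReal.comp (measurable_pi_apply _)

open Classical in
lemma pathWeight_eq_prod_rowWeight (n : ℕ) (v : ℕ → Zd d) (ω : EnvSp d) :
    pathWeight n v ω = ∏ x ∈ (Finset.range n).image v, rowWeight n v x (envRow x ω) := by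
  rw [pathWeight, ← Finset.prod_fiberwise_of_maps_to fun i hi => Finset.mem_image_of_mem v hi]
  refine Finset.prod_congr rfl fun x _ => Finset.prod_congr rfl fun i hi => ?_
  rw [(Finset.mem_filter.1 hi).2, envRow, add_sub_cancel, ← (Finset.mem_filter.1 hi).2]

variable {P : Measure (EnvSp d)}

lemma lintegral_prod_envRow (hC1 : CondC1 P) (G : Zd d → (Zd d → ℝ) → ℝ≥0∞)
    (hG : ∀ x, Measurable (G x)) (s : Finset (Zd d)) :
    ∫⁻ ω, ∏ x ∈ s, G x (envRow x ω) ∂P = ∏ x ∈ s, ∫⁻ ω, G x (envRow 0 ω) ∂P := by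
  rw [lintegral_prod_eq_prod_lintegral_of_indepFun s (fun x ω => G x (envRow x ω))
    (hC1.1.comp G hG) fun x => (hG x).comp (measurable_envRow x)]
  exact Finset.prod_congr rfl fun x _ => ((hC1.2 x).comp (hG x)).lintegral_eq

open Classical in
lemma lintegral_pathWeight (hC1 : CondC1 P) (n : ℕ) (v : ℕ → Zd d) :
    ∫⁻ ω, pathWeight n v ω ∂P =
      ∏ x ∈ (Finset.range n).image v, ∫⁻ ω, rowWeight n v x (envRow 0 ω) ∂P := by
  simp_rw [pathWeight_eq_prod_rowWeight]
  exact lintegral_prod_envRow hC1 _ (measurable_rowWeight n v) _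

lemma lintegral_pathWeight_add_const (hC1 : CondC1 P) (n : ℕ) (v : ℕ → Zd d) (z : Zd d) :
    ∫⁻ ω, pathWeight n (fun i => v i + z) ω ∂P = ∫⁻ ω, pathWeight n v ω ∂P := by
  classical
  have himage : (Finset.range n).image (fun i => v i + z) =
      ((Finset.range n).image v).image (· + z) := by
    rw [Finset.image_image]
    rfl
  rw [lintegral_pathWeight hC1, lintegral_pathWeight hC1, himage,
    Finset.prod_image fun _ _ _ _ => add_right_cancel]
  refine Finset.prod_congr rfl fun x _ => lintegral_congr fun ω => ?_
  simp only [rowWeight, add_left_inj, add_sub_add_right_eq_sub]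

lemma lintegral_pathWeight_mul_fresh (hC1 : CondC1 P) (n : ℕ) (w : ℕ → Zd d) (e : Zd d)
    (hfresh : ∀ i < n, w i ≠ w n) :
    ∫⁻ ω, pathWeight n w ω * ENNReal.ofReal (ω.1 (w n) (w n + e)) ∂P =
      (∫⁻ ω, ENNReal.ofReal (ω.1 0 e) ∂P) * ∫⁻ ω, pathWeight n w ω ∂P := by
  classical
  have hy : w n ∉ (Finset.range n).image w := by
    simpa using fun i hi => hfresh i hi
  set G := Function.update (rowWeight n w) (w n) fun r => ENNReal.ofReal (r e)
  have hG_self : G (w n) = fun r => ENNReal.ofReal (r e) := Function.update_self ..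
  have hG_ne : ∀ x ∈ (Finset.range n).image w, G x = rowWeight n w x := fun x hx =>
    Function.update_of_ne (ne_of_mem_of_not_mem hx hy) ..
  have hG : ∀ x, Measurable (G x) := fun x => by
    by_cases hx : x = w n
    · rw [hx, hG_self]
      exact ENNReal.measurable_ofReal.comp (measurable_pi_apply e)
    · simpa [G, hx] using measurable_rowWeight n w x
  calc ∫⁻ ω, pathWeight n w ω * ENNReal.ofReal (ω.1 (w n) (w n + e)) ∂P
      = ∫⁻ ω, ∏ x ∈ insert (w n) ((Finset.range n).image w), G x (envRow x ω) ∂P := by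
        refine lintegral_congr fun ω => ?_
        rw [Finset.prod_insert hy, hG_self, pathWeight_eq_prod_rowWeight, mul_comm]
        congr 1
        exact Finset.prod_congr rfl fun x hx => by rw [hG_ne x hx]
    _ = (∫⁻ ω, ENNReal.ofReal (ω.1 0 e) ∂P) * ∫⁻ ω, pathWeight n w ω ∂P := by
        rw [lintegral_prod_envRow hC1 G hG, Finset.prod_insert hy, lintegral_pathWeight hC1,
          hG_self]
        congr 1
        · simp only [envRow, zero_add]
        · exact Finset.prod_congr rfl fun x hx => by rw [hG_ne x hx]

end Environment

section Laws

variable {d : ℕ} {κ : Zd d → Kernel (EnvSp d) (Traj d)}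

lemma pathWeight_extendPath (m : ℕ) (w : ℕ → Zd d) (z : Zd d) (ω : EnvSp d) :
    pathWeight (m + 1) (extendPath m w z) ω = pathWeight m w ω * ENNReal.ofReal (ω.1 (w m) z) := by
  rw [pathWeight, Finset.prod_range_succ]
  congr 1
  · refine Finset.prod_congr rfl fun i hi => ?_
    have hi : i < m := Finset.mem_range.1 hi
    simp only [extendPath, if_pos hi.le, if_pos (Nat.succ_le_of_lt hi)]
  · simp [extendPath]

lemma IsQuenched.measure_pathCyl (hκ : IsQuenched κ) (x : Zd d) (ω : EnvSp d) (m : ℕ)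
    (w : ℕ → Zd d) : κ x ω (pathCyl m w) = (if w 0 = x then 1 else 0) * pathWeight m w ω :=
  hκ x ω m w

lemma IsQuenched.isMarkovKernel (hκ : IsQuenched κ) (x : Zd d) : IsMarkovKernel (κ x) := by
  refine ⟨fun ω => ⟨?_⟩⟩
  have huniv : (Set.univ : Set (Traj d)) = ⋃ y : Zd d, pathCyl 0 fun _ => y := by
    ext X
    simp [pathCyl]
  have hdisj : Pairwise (Function.onFun Disjoint fun y : Zd d => pathCyl 0 fun _ => y) :=
    fun y y' hne => Set.disjoint_left.2 fun X h h' =>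
      hne ((h 0 le_rfl).symm.trans (h' 0 le_rfl))
  rw [huniv, measure_iUnion hdisj fun y => measurableSet_pathCyl 0 _]
  simp [hκ.measure_pathCyl, pathWeight]

lemma IsQuenched.measure_pathCyl_inter_step (hκ : IsQuenched κ) (x : Zd d) (ω : EnvSp d)
    (m : ℕ) (w : ℕ → Zd d) (z : Zd d) :
    κ x ω (pathCyl m w ∩ {X | X (m + 1) = z}) =
      κ x ω (pathCyl m w) * ENNReal.ofReal (ω.1 (w m) z) := by
  rw [pathCyl_inter_eq_extendPath, hκ.measure_pathCyl, hκ.measure_pathCyl,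
    pathWeight_extendPath, mul_assoc]
  simp [extendPath]

variable {P : Measure (EnvSp d)}

lemma ann_apply (x : Zd d) {s : Set (Traj d)} (hs : MeasurableSet s) :
    ann P κ x s = ∫⁻ ω, κ x ω s ∂P :=
  Measure.bind_apply hs (κ x).measurable.aemeasurable

lemma IsQuenched.isProbabilityMeasure_ann [IsProbabilityMeasure P] (hκ : IsQuenched κ)
    (x : Zd d) : IsProbabilityMeasure (ann P κ x) := by
  have := hκ.isMarkovKernel x
  unfold ann
  infer_instance

lemma ae_ann_of_ae_ae (x : Zd d) {p : Traj d → Prop} (hp : MeasurableSet {X | p X})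
    (h : ∀ᵐ ω ∂P, ∀ᵐ X ∂κ x ω, p X) : ∀ᵐ X ∂ann P κ x, p X :=
  Measure.ae_comp_of_ae_ae hp h

lemma IsQuenched.ann_pathCyl (hκ : IsQuenched κ) (x : Zd d) (m : ℕ) (w : ℕ → Zd d) :
    ann P κ x (pathCyl m w) = (if w 0 = x then 1 else 0) * ∫⁻ ω, pathWeight m w ω ∂P := by
  rw [ann_apply x (measurableSet_pathCyl m w), ← lintegral_const_mul _ (measurable_pathWeight m w)]
  exact lintegral_congr (hκ.measure_pathCyl x · m w)

/-- At a site not visited before, the next step is drawn from a fresh transition vector, so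
under the annealed law it is an `e`-step with probability `E[ω(0, e)]`. -/
lemma IsQuenched.ann_pathCyl_inter_fresh_step (hκ : IsQuenched κ) (hC1 : CondC1 P) (x e : Zd d)
    (m : ℕ) (w : ℕ → Zd d) (hfresh : ∀ i < m, w i ≠ w m) :
    ann P κ x (pathCyl m w ∩ {X | X (m + 1) = w m + e}) =
      (∫⁻ ω, ENNReal.ofReal (ω.1 0 e) ∂P) * ann P κ x (pathCyl m w) := by
  rw [pathCyl_inter_eq_extendPath, hκ.ann_pathCyl, hκ.ann_pathCyl]
  simp_rw [pathWeight_extendPath]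
  rw [lintegral_pathWeight_mul_fresh hC1 m w e hfresh, mul_left_comm]
  simp [extendPath]

end Laws

section Geometry

variable {d : ℕ}

lemma dotl_add (x y : Zd d) (ℓ : EuclideanSpace ℝ (Fin d)) :
    dotl (x + y) ℓ = dotl x ℓ + dotl y ℓ := by
  simp [dotl, add_mul, Finset.sum_add_distrib]

lemma dotl_neg (x : Zd d) (ℓ : EuclideanSpace ℝ (Fin d)) : dotl (-x) ℓ = -dotl x ℓ := by
  simp [dotl]

lemma dotl_single (i : Fin d) (ℓ : EuclideanSpace ℝ (Fin d)) : dotl (Pi.single i 1) ℓ = ℓ i := by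
  simp [dotl, Pi.single_apply]

/-- The a.s. available steps generate `ℤ^d`, so they cannot all lie in `{x ⬝ ℓ ≥ 0}`. -/
lemma exists_generator_dotl_neg {P : Measure (EnvSp d)} (hC3 : CondC3 P)
    {ℓ : EuclideanSpace ℝ (Fin d)} (hℓ : ℓ ≠ 0) :
    ∃ e : Zd d, P {ω | 0 < ω.1 0 e} = 1 ∧ dotl e ℓ < 0 := by
  obtain ⟨N, hN, hpos⟩ := hC3
  by_contra! h
  have hnonneg : ∀ x : Zd d, 0 ≤ dotl x ℓ := fun x => by
    induction (hN ▸ AddSubmonoid.mem_top x : x ∈ AddSubmonoid.closure N)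
      using AddSubmonoid.closure_induction with
    | mem y hy => exact h y (hpos y hy)
    | zero => simp [dotl]
    | add a b _ _ ha hb => rw [dotl_add]; exact add_nonneg ha hb
  refine hℓ (PiLp.ext fun i => ?_)
  have h₁ := hnonneg (Pi.single i 1)
  have h₂ := hnonneg (-Pi.single i 1)
  rw [dotl_neg, dotl_single] at h₂
  rw [dotl_single] at h₁
  simp only [PiLp.zero_apply]
  linarith

lemma hitTime_eq_top_iff {α : Type*} {A : Set α} {X : ℕ → α} :
    hitTime A X = ⊤ ↔ ∀ n, X n ∉ A := by
  simp [hitTime]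

lemma Tlt_eq_top_iff {ℓ : EuclideanSpace ℝ (Fin d)} {a : ℝ} {X : Traj d} :
    Tlt ℓ a X = ⊤ ↔ ∀ n, a ≤ dotl (X n) ℓ := by
  simp [Tlt, hitTime_eq_top_iff]

lemma exists_eq_shift_of_mem_loopErasures {α : Type*} {X Y : ℕ → α} (h : Y ∈ LoopErasures X) :
    ∃ s i₀ : ℕ, ∀ i, i₀ ≤ i → Y i = X (i + s) := by
  induction h with
  | refl => exact ⟨0, 0, fun i _ => rfl⟩
  | tail _ hZY ih =>
    obtain ⟨s, i₀, hs⟩ := ih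
    obtain ⟨m, n, -, -, rfl⟩ := hZY
    refine ⟨n - m + s, max m i₀, fun i hi => ?_⟩
    simp only [if_neg (by omega : ¬i < m)]
    rw [hs _ (by omega)]
    congr 1
    omega

lemma setOf_Tlt_eq_top_subset_Bdir (ℓ : EuclideanSpace ℝ (Fin d)) :
    {X : Traj d | Tlt ℓ 0 X = ⊤} ⊆ Bdir ℓ :=
  fun X hX => ⟨X, Relation.ReflTransGen.refl, hX⟩

lemma eventually_nonneg_of_mem_Bdir {ℓ : EuclideanSpace ℝ (Fin d)} {X : Traj d}
    (hX : X ∈ Bdir ℓ) : ∀ᶠ n in atTop, 0 ≤ dotl (X n) ℓ := by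
  obtain ⟨Y, hY, hTY⟩ := hX
  obtain ⟨s, i₀, hs⟩ := exists_eq_shift_of_mem_loopErasures hY
  refine eventually_atTop.2 ⟨i₀ + s, fun n hn => ?_⟩
  have := Tlt_eq_top_iff.1 hTY (n - s)
  rwa [hs _ (by omega), Nat.sub_add_cancel (by omega)] at this

lemma tendsto_atTop_of_frequently_lt_imp {u : ℕ → ℝ} {a δ : ℝ} (ha : ∀ᶠ n in atTop, a ≤ u n)
    (hδ : 0 < δ) (h : ∀ b : ℚ, (∃ᶠ n in atTop, u n < b) → ∃ᶠ n in atTop, u n < b - δ) :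
    Tendsto u atTop atTop := by
  have hdrop : ∀ b : ℝ, (∃ᶠ n in atTop, u n < b) → ∃ᶠ n in atTop, u n < b - δ / 2 := by
    intro b hb
    obtain ⟨q, hbq, hq⟩ := exists_rat_btwn (by linarith : b < b + δ / 2)
    exact (h q (hb.mono fun n hn => hn.trans hbq)).mono fun n hn => by linarith
  refine tendsto_atTop.2 fun b => ?_
  by_contra hb
  simp only [not_eventually, not_le] at hb
  have hk : ∀ k : ℕ, ∃ᶠ n in atTop, u n < b - k * (δ / 2) := fun k => by
    induction k with
    | zero => simpa using hb
    | succ k ih => simpa [add_mul, sub_sub] using hdrop _ ih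
  obtain ⟨k, hk'⟩ := exists_nat_gt ((b - a) / (δ / 2))
  obtain ⟨n, hn, han⟩ := ((hk k).and_eventually ha).exists
  rw [div_lt_iff₀ (by linarith)] at hk'
  linarith

lemma infinite_setOf_firstVisit {α : Type*} {X : ℕ → α} {p : α → Prop}
    (hinf : {n | p (X n)}.Infinite) (hfin : ∀ y, p y → {n | X n = y}.Finite) :
    {n | (∀ i < n, X i ≠ X n) ∧ p (X n)}.Infinite := by
  classical
  have himage : (X '' {n | p (X n)}).Infinite := fun hfin' => hinf <|
    (hfin'.biUnion fun y hy => hfin y (by obtain ⟨m, hm, rfl⟩ := hy; exact hm)).subset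
      fun n hn => Set.mem_biUnion (Set.mem_image_of_mem X hn) rfl
  refine fun hF => himage ((hF.image X).subset ?_)
  rintro _ ⟨m, hm, rfl⟩
  have hex : ∃ n, X n = X m := ⟨m, rfl⟩
  refine ⟨Nat.find hex, ⟨fun i hi => ?_, ?_⟩, Nat.find_spec hex⟩
  · rw [Nat.find_spec hex]
    exact Nat.find_min hex hi
  · rw [Nat.find_spec hex]
    exact hm

def IsFreshBelow (ℓ : EuclideanSpace ℝ (Fin d)) (b : ℝ) (n : ℕ) (X : Traj d) : Prop :=
  (∀ i < n, X i ≠ X n) ∧ dotl (X n) ℓ < b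

lemma mem_Adir_of_frequently_step {ℓ : EuclideanSpace ℝ (Fin d)} {e : Zd d} (he : dotl e ℓ < 0)
    {X : Traj d} (hev : ∀ᶠ n in atTop, 0 ≤ dotl (X n) ℓ)
    (hsite : ∀ y, (∃ᶠ n in atTop, X n = y) → ∃ᶠ n in atTop, X n = y ∧ X (n + 1) = X n + e)
    (hfresh : ∀ b : ℚ, (∃ᶠ n in atTop, IsFreshBelow ℓ b n X) →
      ∃ᶠ n in atTop, IsFreshBelow ℓ b n X ∧ X (n + 1) = X n + e) :
    X ∈ Adir ℓ := by
  refine tendsto_atTop_of_frequently_lt_imp hev (neg_pos.2 he) fun b hb => ?_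
  suffices ∃ᶠ n in atTop, dotl (X n) ℓ < b ∧ X (n + 1) = X n + e by
    refine (tendsto_add_atTop_nat 1).frequently (this.mono fun n ⟨hlt, hstep⟩ => ?_)
    rw [hstep, dotl_add]
    linarith
  by_cases hrec : ∃ y, dotl y ℓ < b ∧ ∃ᶠ n in atTop, X n = y
  · obtain ⟨y, hy, hfreq⟩ := hrec
    exact (hsite y hfreq).mono fun n hn => ⟨hn.1 ▸ hy, hn.2⟩
  · simp only [not_exists, not_and] at hrec
    have := infinite_setOf_firstVisit (p := fun y => dotl y ℓ < b)
      (Nat.frequently_atTop_iff_infinite.1 hb) fun y hy =>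
        Set.not_infinite.1 (mt Nat.frequently_atTop_iff_infinite.2 (hrec y hy))
    exact (hfresh b (Nat.frequently_atTop_iff_infinite.2 this)).mono fun n hn => ⟨hn.1.2, hn.2⟩

end Geometry

section Transience

lemma measurableSet_setOf_frequently {Ω : Type*} [MeasurableSpace Ω] {p : ℕ → Ω → Prop}
    (hp : ∀ n, MeasurableSet {x | p n x}) : MeasurableSet {x | ∃ᶠ n in atTop, p n x} := by
  have : {x | ∃ᶠ n in atTop, p n x} = limsup (fun n => {x | p n x}) atTop := by
    ext x
    simp [mem_limsup_iff_frequently_mem]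
  exact this ▸ MeasurableSet.measurableSet_limsup hp

variable {d : ℕ} {P : Measure (EnvSp d)} [IsProbabilityMeasure P]
  {κ : Zd d → Kernel (EnvSp d) (Traj d)} {e : Zd d}

lemma dependsOnPast_isFreshBelow (ℓ : EuclideanSpace ℝ (Fin d)) (b : ℝ) :
    DependsOnPast (IsFreshBelow ℓ b) := fun n X => by
  simp +contextual only [IsFreshBelow, stopAt_apply_of_le X le_rfl]
  exact and_congr_left' <| forall₂_congr fun i hi => by rw [stopAt_apply_of_le X hi.le]

lemma ae_pos_env (he : P {ω | 0 < ω.1 0 e} = 1) : ∀ᵐ ω ∂P, 0 < ω.1 0 e :=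
  (ae_iff_measure_eq (measurableSet_lt measurable_const
    (measurable_env_apply 0 e)).nullMeasurableSet).2 (he.trans measure_univ.symm)

lemma ae_pos_env_at (hC1 : CondC1 P) (he : P {ω | 0 < ω.1 0 e} = 1) (y : Zd d) :
    ∀ᵐ ω ∂P, 0 < ω.1 y (y + e) :=
  (hC1.2 y).symm.ae_snd (p := fun r => 0 < r e)
    (measurableSet_lt measurable_const (measurable_pi_apply e))
    (by simpa [envRow] using ae_pos_env he)

lemma lintegral_ofReal_env_pos (he : P {ω | 0 < ω.1 0 e} = 1) :
    0 < ∫⁻ ω, ENNReal.ofReal (ω.1 0 e) ∂P := by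
  rw [pos_iff_ne_zero, Ne, lintegral_eq_zero_iff (f := fun ω : EnvSp d => ENNReal.ofReal (ω.1 0 e))
    (ENNReal.measurable_ofReal.comp (measurable_env_apply 0 e))]
  intro h0
  obtain ⟨ω, hω0, hωpos⟩ := (h0.and (ae_pos_env he)).exists
  simp only [Pi.zero_apply, ENNReal.ofReal_eq_zero] at hω0
  linarith

lemma IsQuenched.ae_ann_frequently_site_step (hκ : IsQuenched κ) (hC1 : CondC1 P)
    (he : P {ω | 0 < ω.1 0 e} = 1) (x : Zd d) :
    ∀ᵐ X ∂ann P κ x, ∀ y, (∃ᶠ n in atTop, X n = y) →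
      ∃ᶠ n in atTop, X n = y ∧ X (n + 1) = X n + e := by
  refine ae_all_iff.2 fun y => ae_ann_of_ae_ae x ?_ ?_
  · have hstep : ∀ n, MeasurableSet {X : Traj d | X n = y ∧ X (n + 1) = X n + e} := fun n =>
      MeasurableSet.inter (measurableSet_setOf_apply_eq n y) <| measurableSet_eq_fun
        (measurable_pi_apply _) ((measurable_of_countable (· + e)).comp (measurable_pi_apply n))
    exact .imp (measurableSet_setOf_frequently fun n => measurableSet_setOf_apply_eq n y)
      (measurableSet_setOf_frequently hstep)
  filter_upwards [ae_pos_env_at hC1 he y] with ω hω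
  have := (hκ.isMarkovKernel x).isProbabilityMeasure ω
  refine ae_frequently_step_of_frequently (κ x ω) (· + e) (dependsOnPast_apply_eq y)
    (ENNReal.ofReal_pos.2 hω) fun m w _ (hwm : w m = y) => ?_
  rw [hκ.measure_pathCyl_inter_step, hwm, mul_comm]

lemma IsQuenched.ae_ann_frequently_freshBelow_step (hκ : IsQuenched κ) (hC1 : CondC1 P)
    (he : P {ω | 0 < ω.1 0 e} = 1) (ℓ : EuclideanSpace ℝ (Fin d)) (x : Zd d) :
    ∀ᵐ X ∂ann P κ x, ∀ b : ℚ, (∃ᶠ n in atTop, IsFreshBelow ℓ b n X) →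
      ∃ᶠ n in atTop, IsFreshBelow ℓ b n X ∧ X (n + 1) = X n + e := by
  have := hκ.isProbabilityMeasure_ann (P := P) x
  refine ae_all_iff.2 fun b => ae_frequently_step_of_frequently (ann P κ x) (· + e)
    (dependsOnPast_isFreshBelow ℓ b) (lintegral_ofReal_env_pos he) fun m w _ hw => ?_
  exact (hκ.ann_pathCyl_inter_fresh_step hC1 x e m w hw.1).ge

theorem IsQuenched.ann_Bdir_le_ann_Adir (hκ : IsQuenched κ) (hC1 : CondC1 P) (hC3 : CondC3 P)
    {ℓ : EuclideanSpace ℝ (Fin d)} (hℓ : ℓ ≠ 0) (x : Zd d) :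
    ann P κ x (Bdir ℓ) ≤ ann P κ x (Adir ℓ) := by
  obtain ⟨e, he, hdot⟩ := exists_generator_dotl_neg hC3 hℓ
  refine measure_mono_ae ?_
  filter_upwards [hκ.ae_ann_frequently_site_step hC1 he x,
    hκ.ae_ann_frequently_freshBelow_step hC1 he ℓ x] with X hsite hfresh hB
  exact mem_Adir_of_frequently_step hdot (eventually_nonneg_of_mem_Bdir hB) hsite hfresh

end Transience

section StayingAbove

variable {d : ℕ} {P : Measure (EnvSp d)} {κ : Zd d → Kernel (EnvSp d) (Traj d)}

def shiftPath (t : ℕ) (z : Zd d) (X : Traj d) : Traj d := fun n => X (t + n) - z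

def gluePath (t : ℕ) (z : Zd d) (w u : ℕ → Zd d) : ℕ → Zd d :=
  fun i => if i ≤ t then w i else u (i - t) + z

lemma mem_pathCyl_gluePath {t m : ℕ} {z : Zd d} {X : Traj d} :
    X ∈ pathCyl (t + m) (gluePath t z (stopAt t X) (stopAt m (shiftPath t z X))) := by
  intro i hi
  by_cases hit : i ≤ t
  · simp [gluePath, hit, stopAt_apply_of_le X hit]
  · simp [gluePath, hit, stopAt_apply_of_le _ (by omega : i - t ≤ m), shiftPath,
      Nat.add_sub_cancel' (by omega : t ≤ i)]

lemma pathWeight_gluePath {t m : ℕ} {z : Zd d} {w u : ℕ → Zd d} (hw : w t = z) (hu : u 0 = 0)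
    (ω : EnvSp d) :
    pathWeight (t + m) (gluePath t z w u) ω = pathWeight t w ω * pathWeight m (u · + z) ω := by
  have hlate : ∀ i, gluePath t z w u (t + i) = u i + z := fun i => by
    rcases i.eq_zero_or_pos with rfl | hi
    · simp [gluePath, hw, hu]
    · simp [gluePath, show ¬t + i ≤ t by omega]
  rw [pathWeight, Finset.prod_range_add]
  congr 1
  · refine Finset.prod_congr rfl fun i hi => ?_
    have hi : i < t := Finset.mem_range.1 hi
    simp [gluePath, hi.le, Nat.succ_le_of_lt hi]
  · exact Finset.prod_congr rfl fun i _ => by rw [hlate, add_assoc, hlate]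

lemma IsQuenched.measure_pathCyl_gluePath (hκ : IsQuenched κ) (x : Zd d) (ω : EnvSp d)
    {t m : ℕ} {z : Zd d} {w u : ℕ → Zd d} (hw : w t = z) (hu : u 0 = 0) :
    κ x ω (pathCyl (t + m) (gluePath t z w u)) =
      κ x ω (pathCyl t w) * pathWeight m (u · + z) ω := by
  rw [hκ.measure_pathCyl, hκ.measure_pathCyl, pathWeight_gluePath hw hu, mul_assoc]
  simp [gluePath]

theorem IsQuenched.ann_shiftPath_le (hκ : IsQuenched κ) (hC1 : CondC1 P) (x : Zd d) (t m : ℕ)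
    (z : Zd d) (A : Set (Traj d)) :
    ann P κ x {X | X t = z ∧ stopAt m (shiftPath t z X) ∈ A} ≤
      ann P κ 0 {X | stopAt m X ∈ A} := by
  set W := {w : Traj d | IsStoppedAt t w ∧ w t = z}
  set U := {u : Traj d | IsStoppedAt m u ∧ u 0 = 0 ∧ u ∈ A}
  have : Countable W := ((countable_setOf_isStoppedAt t).mono fun _ hw => hw.1).to_subtype
  have : Countable U := ((countable_setOf_isStoppedAt m).mono fun _ hu => hu.1).to_subtype
  have hκ_meas : ∀ s, MeasurableSet s → Measurable fun ω => κ x ω s :=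
    fun s hs => (κ x).measurable_coe hs
  have hpast : ∀ ω, ∑' w : W, κ x ω (pathCyl t w) ≤ 1 := fun ω => by
    have := (hκ.isMarkovKernel x).isProbabilityMeasure ω
    rw [← measure_iUnion (pairwise_disjoint_pathCyl fun w hw => hw.1)
      fun w => measurableSet_pathCyl _ _]
    exact prob_le_one
  calc ann P κ x {X | X t = z ∧ stopAt m (shiftPath t z X) ∈ A}
      ≤ ann P κ x (⋃ p : W × U, pathCyl (t + m) (gluePath t z p.1 p.2)) := by
        refine measure_mono fun X ⟨hXt, hXA⟩ => Set.mem_iUnion.2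
          ⟨(⟨stopAt t X, isStoppedAt_stopAt t X, ?_⟩, ⟨stopAt m (shiftPath t z X),
            isStoppedAt_stopAt m _, ?_, hXA⟩), mem_pathCyl_gluePath⟩
        · rwa [stopAt_apply_of_le X le_rfl]
        · simp [stopAt, shiftPath, hXt]
    _ ≤ ∑' p : W × U, ann P κ x (pathCyl (t + m) (gluePath t z p.1 p.2)) := measure_iUnion_le _
    _ = ∫⁻ ω, ∑' p : W × U, κ x ω (pathCyl t p.1) * pathWeight m (p.2.1 · + z) ω ∂P := by
        refine (tsum_congr fun p => ?_).trans (lintegral_tsum fun p => ((hκ_meas _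
          (measurableSet_pathCyl _ _)).mul (measurable_pathWeight _ _)).aemeasurable).symm
        rw [ann_apply x (measurableSet_pathCyl _ _)]
        exact lintegral_congr fun ω => hκ.measure_pathCyl_gluePath x ω p.1.2.2 p.2.2.2.1
    _ = ∫⁻ ω, (∑' w : W, κ x ω (pathCyl t w)) * ∑' u : U, pathWeight m (u.1 · + z) ω ∂P := by
        simp_rw [ENNReal.tsum_prod', ENNReal.tsum_mul_left, ENNReal.tsum_mul_right]
    _ ≤ ∫⁻ ω, ∑' u : U, pathWeight m (u.1 · + z) ω ∂P :=
        lintegral_mono fun ω => mul_le_of_le_one_left' (hpast ω)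
    _ = ∑' u : U, ann P κ 0 (pathCyl m u) := by
        rw [lintegral_tsum fun u => (measurable_pathWeight _ _).aemeasurable]
        refine tsum_congr fun u => ?_
        rw [lintegral_pathWeight_add_const hC1, hκ.ann_pathCyl, if_pos u.2.2.1, one_mul]
    _ = ann P κ 0 (⋃ u : U, pathCyl m u) :=
        (measure_iUnion (pairwise_disjoint_pathCyl fun u hu => hu.1)
          fun u => measurableSet_pathCyl _ _).symm
    _ ≤ ann P κ 0 {X | stopAt m X ∈ A} := measure_mono fun X hX => by
        obtain ⟨u, hu⟩ := Set.mem_iUnion.1 hX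
        rw [Set.mem_ofPred_eq, (mem_pathCyl_iff u.2.1).1 hu]
        exact u.2.2.2

lemma Adir_subset_iUnion_stayAbove (ℓ : EuclideanSpace ℝ (Fin d)) :
    Adir ℓ ⊆ ⋃ p : ℕ × Zd d, {X | X p.1 = p.2 ∧ ∀ n, dotl p.2 ℓ ≤ dotl (X n) ℓ} := fun X hX => by
  have hX : Tendsto (fun n => dotl (X n) ℓ) cofinite atTop := by
    rw [Nat.cofinite_eq_atTop]
    exact hX
  obtain ⟨t, ht⟩ := hX.exists_forall_le
  exact Set.mem_iUnion.2 ⟨(t, X t), rfl, ht⟩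

lemma measurableSet_setOf_forall_le_dotl_nonneg (ℓ : EuclideanSpace ℝ (Fin d)) (m : ℕ) :
    MeasurableSet {X : Traj d | ∀ n ≤ m, 0 ≤ dotl (X n) ℓ} := by
  simp only [Set.ofPred_forall]
  exact .iInter fun n => .iInter fun _ =>
    measurableSet_le measurable_const
      ((measurable_of_countable fun x : Zd d => dotl x ℓ).comp (measurable_pi_apply n))

theorem IsQuenched.ann_stayAbove_le [IsProbabilityMeasure P] (hκ : IsQuenched κ)
    (hC1 : CondC1 P) (ℓ : EuclideanSpace ℝ (Fin d)) (x : Zd d) (t : ℕ) (z : Zd d) :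
    ann P κ x {X | X t = z ∧ ∀ n, dotl z ℓ ≤ dotl (X n) ℓ} ≤ ann P κ 0 {X | Tlt ℓ 0 X = ⊤} := by
  have := hκ.isProbabilityMeasure_ann (P := P) 0
  set A := {u : Traj d | ∀ n, 0 ≤ dotl (u n) ℓ}
  have hstop : ∀ m (X : Traj d), stopAt m X ∈ A ↔ ∀ n ≤ m, 0 ≤ dotl (X n) ℓ := fun m X =>
    ⟨fun h n hn => stopAt_apply_of_le X hn ▸ h n, fun h n => h _ (min_le_right n m)⟩
  have hiInter : {X | Tlt ℓ 0 X = ⊤} = ⋂ m, {X : Traj d | ∀ n ≤ m, 0 ≤ dotl (X n) ℓ} := by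
    ext X
    simp only [Set.mem_iInter, Set.mem_ofPred_eq, Tlt_eq_top_iff]
    exact ⟨fun h m n _ => h n, fun h n => h n n le_rfl⟩
  have hlim : ann P κ 0 {X | Tlt ℓ 0 X = ⊤} = ⨅ m, ann P κ 0 {X | stopAt m X ∈ A} := by
    simp_rw [hiInter, hstop]
    exact Antitone.measure_iInter (fun m m' hmm' X hX n hn => hX n (hn.trans hmm'))
      (fun m => (measurableSet_setOf_forall_le_dotl_nonneg ℓ m).nullMeasurableSet)
      ⟨0, measure_ne_top _ _⟩
  rw [hlim]
  refine le_iInf fun m => (measure_mono ?_).trans (hκ.ann_shiftPath_le hC1 x t m z A)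
  rintro X ⟨hXt, hX⟩
  refine ⟨hXt, fun n => ?_⟩
  simp only [stopAt, shiftPath, sub_eq_add_neg, dotl_add, dotl_neg]
  linarith [hX (t + min n m)]

theorem IsQuenched.ann_Tlt_pos_of_ann_Adir_pos [IsProbabilityMeasure P] (hκ : IsQuenched κ)
    (hC1 : CondC1 P) {ℓ : EuclideanSpace ℝ (Fin d)} {x : Zd d} (h : 0 < ann P κ x (Adir ℓ)) :
    0 < ann P κ 0 {X | Tlt ℓ 0 X = ⊤} := by
  contrapose! h
  exact nonpos_iff_eq_zero.2 <| measure_mono_null (Adir_subset_iUnion_stayAbove ℓ) <|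
    measure_iUnion_null fun p => nonpos_iff_eq_zero.1 <|
      (hκ.ann_stayAbove_le hC1 ℓ x p.1 p.2).trans h

end StayingAbove

theorem B_between_T_and_A_general
    (P : Measure (EnvSp 2)) [IsProbabilityMeasure P]
    (κ : Zd 2 → Kernel (EnvSp 2) (Traj 2))
    (hκ : IsQuenched κ)
    (hC1 : CondC1 P) (hC3 : CondC3 P)
    (ℓ : EuclideanSpace ℝ (Fin 2)) (hℓ : ‖ℓ‖ = 1) :
    ann P κ 0 {X | Tlt ℓ 0 X = ⊤} ≤ ann P κ 0 (Bdir ℓ) ∧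
    ann P κ 0 (Bdir ℓ) ≤ ann P κ 0 (Adir ℓ) ∧
    (0 < ann P κ 0 (Adir ℓ) ↔ 0 < ann P κ 0 (Bdir ℓ)) := by
  have hTB : ann P κ 0 {X | Tlt ℓ 0 X = ⊤} ≤ ann P κ 0 (Bdir ℓ) :=
    measure_mono (setOf_Tlt_eq_top_subset_Bdir ℓ)
  have hBA : ann P κ 0 (Bdir ℓ) ≤ ann P κ 0 (Adir ℓ) :=
    hκ.ann_Bdir_le_ann_Adir hC1 hC3 (norm_ne_zero_iff.1 (hℓ ▸ one_ne_zero)) 0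
  exact ⟨hTB, hBA, fun hA => (hκ.ann_Tlt_pos_of_ann_Adir_pos hC1 hA).trans_le hTB,
    fun hB => hB.trans_le hBA⟩

/-- `P⁰(T_{<0} = ∞) ≤ P⁰(B_ℓ) ≤ P⁰(A_ℓ)`, and consequently
`P⁰(A_ℓ) > 0 ↔ P⁰(B_ℓ) > 0`. -/
theorem B_between_T_and_A
    (P : Measure (EnvSp 2)) [IsProbabilityMeasure P]
    (κ : Zd 2 → Kernel (EnvSp 2) (Traj 2)) [∀ x, IsMarkovKernel (κ x)]
    (hκ : IsQuenched κ)
    (hC1 : CondC1 P) (R : ℝ) (hC2 : CondC2 P R) (hC3 : CondC3 P)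
    (ℓ : EuclideanSpace ℝ (Fin 2)) (hℓ : ‖ℓ‖ = 1) :
    ann P κ 0 {X | Tlt ℓ 0 X = ⊤} ≤ ann P κ 0 (Bdir ℓ) ∧
    ann P κ 0 (Bdir ℓ) ≤ ann P κ 0 (Adir ℓ) ∧
    (0 < ann P κ 0 (Adir ℓ) ↔ 0 < ann P κ 0 (Bdir ℓ)) :=
  B_between_T_and_A_general P κ hκ hC1 hC3 ℓ hℓ
end
end

section
/- (Geometric lemma.) Fix a unit vector ℓ ∈ ℝ^d, h > 0, and real numbers L' > L > 0. Then there is a neighborhood of ℓ in the unit sphere S^{d−1} such that for every unit vector v in this neighborhood and every x ∈ ℝ^d satisfying x · ℓ ≥ L' and x · v ≤ L, there exists a unit vector ℓ^⊥ perpendicular to ℓ with x · ℓ^⊥ > h. -/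
/-!
Split `x = ⟪x, ℓ⟫ ℓ + y` with `y ⊥ ℓ`. For unit vectors with `s = ‖v - ℓ‖` one has
`⟪ℓ, v⟫ = 1 - s² / 2` and `⟪y, v⟫ = ⟪y, v - ℓ⟫ ≥ -‖y‖ s`, so `⟪x, v⟫ ≥ L' (1 - s² / 2) - ‖y‖ s`.
If `‖y‖ ≤ h`, this exceeds `L` as soon as `s < min 1 ((L' - L) / (L' + h))`; hence `‖y‖ > h` and
`ℓ^⊥ = y / ‖y‖` works.
-/

open scoped InnerProductSpace

section
variable {E : Type*} [NormedAddCommGroup E] [InnerProductSpace ℝ E] {ℓ v : E}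

lemma inner_sub_inner_smul_self_of_norm_eq_one (hℓ : ‖ℓ‖ = 1) (x : E) :
    ⟪x - ⟪x, ℓ⟫_ℝ • ℓ, ℓ⟫_ℝ = 0 := by
  rw [inner_sub_left, real_inner_smul_left, real_inner_self_eq_norm_sq, hℓ]
  ring

lemma exists_unit_orthogonal_inner_gt (hℓ : ‖ℓ‖ = 1) {x : E} {h : ℝ} (hh : 0 ≤ h)
    (hx : h < ‖x - ⟪x, ℓ⟫_ℝ • ℓ‖) : ∃ lp : E, ‖lp‖ = 1 ∧ ⟪lp, ℓ⟫_ℝ = 0 ∧ h < ⟪x, lp⟫_ℝ := by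
  set y := x - ⟪x, ℓ⟫_ℝ • ℓ with hy
  have hy0 : ‖y‖ ≠ 0 := (hh.trans_lt hx).ne'
  have hyℓ : ⟪y, ℓ⟫_ℝ = 0 := inner_sub_inner_smul_self_of_norm_eq_one hℓ x
  have hxy : ⟪x, y⟫_ℝ = ‖y‖ ^ 2 := by
    rw [show x = y + ⟪x, ℓ⟫_ℝ • ℓ by rw [hy, sub_add_cancel], inner_add_left,
      real_inner_smul_left, real_inner_comm y ℓ, hyℓ, real_inner_self_eq_norm_sq]
    ring
  refine ⟨‖y‖⁻¹ • y, ?_, ?_, ?_⟩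
  · rw [norm_smul, norm_inv, norm_norm, inv_mul_cancel₀ hy0]
  · rw [real_inner_smul_left, hyℓ, mul_zero]
  · rwa [real_inner_smul_right, hxy, sq, inv_mul_cancel_left₀ hy0]

lemma inner_eq_one_sub_norm_sub_sq_div_two (hℓ : ‖ℓ‖ = 1) (hv : ‖v‖ = 1) :
    ⟪ℓ, v⟫_ℝ = 1 - ‖v - ℓ‖ ^ 2 / 2 := by
  rw [norm_sub_sq_real, hv, hℓ, real_inner_comm]
  ring

lemma le_inner_of_norm_eq_one (hℓ : ‖ℓ‖ = 1) (hv : ‖v‖ = 1) (x : E) :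
    ⟪x, ℓ⟫_ℝ * (1 - ‖v - ℓ‖ ^ 2 / 2) - ‖x - ⟪x, ℓ⟫_ℝ • ℓ‖ * ‖v - ℓ‖ ≤ ⟪x, v⟫_ℝ := by
  set y := x - ⟪x, ℓ⟫_ℝ • ℓ
  have hdecomp : ⟪x, v⟫_ℝ = ⟪x, ℓ⟫_ℝ * ⟪ℓ, v⟫_ℝ + ⟪y, v - ℓ⟫_ℝ := by
    rw [inner_sub_right, inner_sub_inner_smul_self_of_norm_eq_one hℓ, inner_sub_left,
      real_inner_smul_left]
    ring
  rw [hdecomp, ← inner_eq_one_sub_norm_sub_sq_div_two hℓ hv]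
  linarith [neg_le_of_abs_le (abs_real_inner_le_norm y (v - ℓ))]

end

/-- Geometric lemma (Lemma 3.5 of the paper): for a unit vector `ℓ`, `h > 0`, and
`L' > L > 0`, every unit vector `v` sufficiently close to `ℓ` has the property that
any `x` with `x · ℓ ≥ L'` and `x · v ≤ L` satisfies `x · ℓ^⊥ > h` for some unit
vector `ℓ^⊥` perpendicular to `ℓ`. -/
theorem geometric_lemma {d : ℕ} (ℓ : EuclideanSpace ℝ (Fin d)) (hℓ : ‖ℓ‖ = 1)
    (h : ℝ) (hh : 0 < h) (L L' : ℝ) (hL : 0 < L) (hLL' : L < L') :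
    ∃ ε > 0, ∀ v : EuclideanSpace ℝ (Fin d), ‖v‖ = 1 → ‖v - ℓ‖ < ε →
      ∀ x : EuclideanSpace ℝ (Fin d), L' ≤ ⟪x, ℓ⟫_ℝ → ⟪x, v⟫_ℝ ≤ L →
        ∃ lp : EuclideanSpace ℝ (Fin d), ‖lp‖ = 1 ∧ ⟪lp, ℓ⟫_ℝ = 0 ∧ h < ⟪x, lp⟫_ℝ := by
  have hL' : 0 < L' := hL.trans hLL'
  refine ⟨min 1 ((L' - L) / (L' + h)), lt_min one_pos (by apply div_pos <;> linarith),
    fun v hv hvℓ x hxℓ hxv => exists_unit_orthogonal_inner_gt hℓ hh.le ?_⟩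
  set s := ‖v - ℓ‖
  have hs0 : 0 ≤ s := norm_nonneg _
  have hs1 : s < 1 := hvℓ.trans_le (min_le_left _ _)
  have hs : (L' + h) * s < L' - L :=
    (lt_div_iff₀' (by linarith)).1 (hvℓ.trans_le (min_le_right _ _))
  by_contra! hy
  refine hxv.not_gt ?_
  have hcos : 0 ≤ 1 - s ^ 2 / 2 := by nlinarith
  calc L < L' - (L' + h) * s := by linarith
    _ ≤ L' * (1 - s ^ 2 / 2) - h * s := by nlinarith
    _ ≤ ⟪x, ℓ⟫_ℝ * (1 - s ^ 2 / 2) - ‖x - ⟪x, ℓ⟫_ℝ • ℓ‖ * s := by gcongr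
    _ ≤ ⟪x, v⟫_ℝ := le_inner_of_norm_eq_one hℓ hv x
end

section
/- (Slab lemma, bounded-jump version of Zerner–Merkl Lemma 4.) Let 𝐏 be a probability measure on environments on ℤ^d satisfying (C1), (C2), and (C3), let ℓ be a unit vector in ℝ^d, and let a ≤ b be real numbers. Then P⁰-almost surely, if X_n · ℓ ∈ [a, b] for infinitely many n, then X_n · ℓ < a for some n and X_m · ℓ > b for some m. Equivalently, it is P⁰-a.s. impossible to visit the slab {x : a ≤ x · ℓ ≤ b} infinitely often without visiting both neighboring half-spaces. -/
/-!
Choose a step `z` that is a.s. available (C3) with `z · ℓ < 0`, and `K` so large that `K` steps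
`z` from a level near `b` lead below `a`. Suppose the walk stays above `a` but returns below `b`
infinitely often. Comparing with the liminf `L` of the levels, either some low site `x` is visited
infinitely often, or infinitely often the walk is at a fresh low site whose `z`-ray of length `K`
was never visited. Each such time is a trial: following the ray would take the walk below `a`.
At visits to `x` a trial succeeds with quenched probability `∏ ω(x + j z, x + (j+1) z) > 0`; at
fresh-ray times with annealed probability `E[ω(0, z)] ^ K > 0`, because by (C1) the environment
on unvisited sites is independent of the past. Trials `K` steps apart that are each successful with
conditional probability at least `e > 0` cannot all fail. Applying this to `ℓ` and `-ℓ` gives the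
slab lemma.
-/

open MeasureTheory ProbabilityTheory Filter Topology

noncomputable section

namespace PathSpace

open scoped ENNReal

variable {α : Type*}

section Cylinders

def cylinder (n : ℕ) (q : ℕ → α) : Set (ℕ → α) := {X | ∀ i ≤ n, X i = q i}

def DeterminedUpTo (n : ℕ) (C : Set (ℕ → α)) : Prop :=
  ∀ ⦃X Y : ℕ → α⦄, (∀ i ≤ n, X i = Y i) → X ∈ C → Y ∈ C

lemma determinedUpTo_cylinder (n : ℕ) (q : ℕ → α) : DeterminedUpTo n (cylinder n q) :=
  fun _ _ hXY hX i hi => (hXY i hi).symm.trans (hX i hi)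

lemma determinedUpTo_setOf_eval (n : ℕ) (p : α → Prop) :
    DeterminedUpTo n {X : ℕ → α | p (X n)} := by
  intro X Y hXY hX
  rwa [Set.mem_ofPred_eq, ← hXY n le_rfl]

namespace DeterminedUpTo

variable {n m : ℕ} {C D : Set (ℕ → α)}

lemma univ : DeterminedUpTo n (Set.univ : Set (ℕ → α)) := fun _ _ _ _ => trivial

lemma mono (hC : DeterminedUpTo n C) (hnm : n ≤ m) : DeterminedUpTo m C :=
  fun _ _ hXY => hC fun i hi => hXY i (hi.trans hnm)

lemma inter (hC : DeterminedUpTo n C) (hD : DeterminedUpTo n D) : DeterminedUpTo n (C ∩ D) :=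
  fun _ _ hXY hX => ⟨hC hXY hX.1, hD hXY hX.2⟩

lemma compl (hC : DeterminedUpTo n C) : DeterminedUpTo n Cᶜ :=
  fun _ _ hXY hX hY => hX (hC (fun i hi => (hXY i hi).symm) hY)

lemma diff (hC : DeterminedUpTo n C) (hD : DeterminedUpTo n D) : DeterminedUpTo n (C \ D) :=
  hC.inter hD.compl

end DeterminedUpTo

def initSeg (n : ℕ) (X : ℕ → α) : Fin (n + 1) → α := fun i => X i

lemma cylinder_eq_preimage (n : ℕ) (q : ℕ → α) :
    cylinder n q = initSeg n ⁻¹' {initSeg n q} := by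
  ext X
  simp only [cylinder, Set.mem_ofPred_eq, Set.mem_preimage, Set.mem_singleton_iff, funext_iff,
    initSeg, Fin.forall_iff, Nat.lt_succ_iff]

lemma DeterminedUpTo.preimage_image {n : ℕ} {C : Set (ℕ → α)} (hC : DeterminedUpTo n C) :
    initSeg n ⁻¹' (initSeg n '' C) = C := by
  refine subset_antisymm ?_ (Set.subset_preimage_image _ _)
  rintro X ⟨Y, hY, hYX⟩
  exact hC (fun i hi => congrFun hYX ⟨i, Nat.lt_succ_of_le hi⟩) hY

variable [MeasurableSpace α]

lemma measurable_initSeg (n : ℕ) : Measurable (initSeg n : (ℕ → α) → Fin (n + 1) → α) :=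
  measurable_pi_lambda _ fun i => measurable_pi_apply (i : ℕ)

variable [MeasurableSingletonClass α] [Countable α]

lemma DeterminedUpTo.measurableSet {n : ℕ} {C : Set (ℕ → α)} (hC : DeterminedUpTo n C) :
    MeasurableSet C :=
  hC.preimage_image ▸ measurable_initSeg n (MeasurableSet.of_discrete)

lemma DeterminedUpTo.measure_diff_le {μ : Measure (ℕ → α)} [IsFiniteMeasure μ] {n : ℕ}
    {C S : Set (ℕ → α)} (hC : DeterminedUpTo n C) (hS : MeasurableSet S) {e : ℝ≥0∞} (he : e ≠ ∞)
    (hcyl : ∀ q ∈ C, e * μ (cylinder n q) ≤ μ (cylinder n q ∩ S)) :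
    μ (C \ S) ≤ (1 - e) * μ C := by
  have hcount : (initSeg n '' C).Countable := Set.to_countable _
  have hfib : ∀ v ∈ initSeg n '' C, MeasurableSet (initSeg n ⁻¹' {v}) :=
    fun _ _ => measurable_initSeg n (MeasurableSet.singleton _)
  have hfib_le : ∀ v : initSeg n '' C,
      μ.restrict Sᶜ (initSeg n ⁻¹' {↑v}) ≤ (1 - e) * μ (initSeg n ⁻¹' {↑v}) := by
    rintro ⟨_, q, hq, rfl⟩
    rw [← cylinder_eq_preimage, Measure.restrict_apply' hS.compl, ← Set.sdiff_eq,
      ENNReal.sub_mul fun _ _ => measure_ne_top μ _, one_mul]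
    refine ENNReal.le_sub_of_add_le_right (ENNReal.mul_ne_top he (measure_ne_top μ _)) ?_
    calc μ (cylinder n q \ S) + e * μ (cylinder n q)
        ≤ μ (cylinder n q \ S) + μ (cylinder n q ∩ S) := by gcongr; exact hcyl q hq
      _ = μ (cylinder n q) := measure_sdiff_add_inter _ hS
  calc μ (C \ S) = μ.restrict Sᶜ (initSeg n ⁻¹' (initSeg n '' C)) := by
        rw [hC.preimage_image, Measure.restrict_apply' hS.compl, Set.sdiff_eq]
    _ = ∑' v : initSeg n '' C, μ.restrict Sᶜ (initSeg n ⁻¹' {↑v}) :=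
        (tsum_measure_preimage_singleton hcount hfib).symm
    _ ≤ ∑' v : initSeg n '' C, (1 - e) * μ (initSeg n ⁻¹' {↑v}) := ENNReal.tsum_le_tsum hfib_le
    _ = (1 - e) * μ C := by
        rw [ENNReal.tsum_mul_left, tsum_measure_preimage_singleton hcount hfib,
          hC.preimage_image]

end Cylinders

section Trials

open Function

variable {G S : ℕ → Set (ℕ → α)}

/-- `X ∈ G n`: a trial takes place at time `n`; `X ∈ S n`: that trial succeeds. -/
def failsFrom (G S : ℕ → Set (ℕ → α)) (m : ℕ) : Set (ℕ → α) :=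
  {X | (∃ᶠ n in atTop, X ∈ G n) ∧ ∀ n ≥ m, X ∈ G n → X ∉ S n}

def firstHitAt (G : ℕ → Set (ℕ → α)) (m j : ℕ) : Set (ℕ → α) :=
  {X | X ∈ G (m + j) ∧ ∀ i < j, X ∉ G (m + i)}

lemma determinedUpTo_firstHitAt (hG : ∀ n, DeterminedUpTo n (G n)) (m j : ℕ) :
    DeterminedUpTo (m + j) (firstHitAt G m j) := by
  rintro X Y hXY ⟨hX, hfirst⟩
  refine ⟨hG _ hXY hX, fun i hi hY => hfirst i hi ?_⟩
  exact (hG (m + i)).mono (by omega) (fun k hk => (hXY k hk).symm) hY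

lemma pairwise_disjoint_firstHitAt (m : ℕ) : Pairwise (Disjoint on firstHitAt G m) := by
  intro j j' hjj'
  refine Set.disjoint_left.2 fun X hX hX' => ?_
  rcases hjj'.lt_or_gt with h | h
  · exact hX'.2 j h hX.1
  · exact hX.2 j' h hX'.1

lemma failsFrom_subset_iUnion_firstHitAt (m K : ℕ) :
    failsFrom G S m ⊆ ⋃ j, (firstHitAt G m j \ S (m + j)) ∩ failsFrom G S (m + j + K) := by
  classical
  rintro X ⟨hfreq, hfail⟩
  have hhit : ∃ j, X ∈ G (m + j) := by
    obtain ⟨n, hn, hX⟩ := frequently_atTop.1 hfreq m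
    exact ⟨n - m, by rwa [Nat.add_sub_cancel' hn]⟩
  refine Set.mem_iUnion.2 ⟨Nat.find hhit, ⟨⟨Nat.find_spec hhit, fun i hi => Nat.find_min hhit hi⟩,
    hfail _ (Nat.le_add_right _ _) (Nat.find_spec hhit)⟩, hfreq, fun n hn => hfail n (by omega)⟩

lemma measurableSet_failsFrom [MeasurableSpace α] (hG : ∀ n, MeasurableSet (G n))
    (hS : ∀ n, MeasurableSet (S n)) (m : ℕ) : MeasurableSet (failsFrom G S m) := by
  have : failsFrom G S m = limsup G atTop ∩ ⋂ n ≥ m, (G n ∩ S n)ᶜ := by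
    ext X
    simp [failsFrom, mem_limsup_iff_frequently_mem]
  rw [this]
  exact (MeasurableSet.measurableSet_limsup hG).inter
    (.iInter fun n => .iInter fun _ => ((hG n).inter (hS n)).compl)

variable [MeasurableSpace α] [MeasurableSingletonClass α] [Countable α]
  {μ : Measure (ℕ → α)} {K : ℕ} {e : ℝ≥0∞}

/-- Each trial fails with conditional probability at most `1 - e`, and trials `K` apart are
decided by disjoint stretches of the path, so `k` failures cost a factor `(1 - e) ^ k`. -/
lemma measure_inter_failsFrom_le (hG : ∀ n, DeterminedUpTo n (G n))
    (hS : ∀ n, DeterminedUpTo (n + K) (S n))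
    (hkey : ∀ n E, DeterminedUpTo n E → E ⊆ G n → μ (E \ S n) ≤ (1 - e) * μ E) (k : ℕ) :
    ∀ m C, DeterminedUpTo m C → μ (C ∩ failsFrom G S m) ≤ (1 - e) ^ k * μ C := by
  induction k with
  | zero => intro m C _; simpa using measure_mono Set.inter_subset_left
  | succ k ih =>
    intro m C hC
    set E := fun j => C ∩ firstHitAt G m j
    have hE : ∀ j, DeterminedUpTo (m + j) (E j) :=
      fun j => (hC.mono (by omega)).inter (determinedUpTo_firstHitAt hG m j)
    have hEdisj : Pairwise (Disjoint on E) := fun j j' h =>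
      ((pairwise_disjoint_firstHitAt m h).mono Set.inter_subset_right Set.inter_subset_right)
    calc μ (C ∩ failsFrom G S m)
        ≤ μ (⋃ j, (E j \ S (m + j)) ∩ failsFrom G S (m + j + K)) := by
          refine measure_mono fun X ⟨hXC, hX⟩ => ?_
          obtain ⟨j, hj⟩ := Set.mem_iUnion.1 (failsFrom_subset_iUnion_firstHitAt m K hX)
          exact Set.mem_iUnion.2 ⟨j, ⟨⟨hXC, hj.1.1⟩, hj.1.2⟩, hj.2⟩
      _ ≤ ∑' j, μ ((E j \ S (m + j)) ∩ failsFrom G S (m + j + K)) := measure_iUnion_le _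
      _ ≤ ∑' j, (1 - e) ^ k * μ (E j \ S (m + j)) :=
          ENNReal.tsum_le_tsum fun j => ih _ _ (((hE j).mono (by omega)).diff (hS _))
      _ ≤ ∑' j, (1 - e) ^ k * ((1 - e) * μ (E j)) := by
          gcongr with j
          exact hkey _ _ (hE j) (Set.inter_subset_right.trans fun _ hX => hX.1)
      _ = (1 - e) ^ (k + 1) * μ (⋃ j, E j) := by
          rw [ENNReal.tsum_mul_left, ENNReal.tsum_mul_left,
            measure_iUnion hEdisj fun j => (hE j).measurableSet, pow_succ, mul_assoc]
      _ ≤ (1 - e) ^ (k + 1) * μ C := by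
          gcongr
          exact Set.iUnion_subset fun _ => Set.inter_subset_left

theorem measure_failsFrom_eq_zero [IsFiniteMeasure μ] (hG : ∀ n, DeterminedUpTo n (G n))
    (hS : ∀ n, DeterminedUpTo (n + K) (S n)) (he : e ≠ 0)
    (hkey : ∀ n E, DeterminedUpTo n E → E ⊆ G n → μ (E \ S n) ≤ (1 - e) * μ E) :
    μ (failsFrom G S 0) = 0 := by
  have hbound : ∀ k, μ (failsFrom G S 0) ≤ (1 - e) ^ k * μ Set.univ := fun k => by
    simpa using measure_inter_failsFrom_le hG hS hkey k 0 Set.univ DeterminedUpTo.univ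
  have hlim : Tendsto (fun k => (1 - e) ^ k * μ Set.univ) atTop (𝓝 0) := by
    simpa using ENNReal.Tendsto.mul_const (ENNReal.tendsto_pow_atTop_nhds_zero_of_lt_one
      (ENNReal.sub_lt_self ENNReal.one_ne_top one_ne_zero he))
      (Or.inr (measure_ne_top μ _))
  exact le_antisymm (ge_of_tendsto' hlim hbound) bot_le

end Trials

section Ray

variable [AddMonoid α] {z : α} {K n : ℕ} {q : ℕ → α}

def followsRay (z : α) (K n : ℕ) : Set (ℕ → α) := {X | ∀ j ≤ K, X (n + j) = X n + j • z}

def freshRay (z : α) (K n : ℕ) : Set (ℕ → α) := {X | ∀ j < K, ∀ i < n, X i ≠ X n + j • z}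

def appendRay (z : α) (n : ℕ) (q : ℕ → α) : ℕ → α :=
  fun i => if i ≤ n then q i else q n + (i - n) • z

lemma appendRay_of_le {i : ℕ} (h : i ≤ n) : appendRay z n q i = q i := if_pos h

lemma appendRay_add (j : ℕ) : appendRay z n q (n + j) = q n + j • z := by
  rcases j.eq_zero_or_pos with rfl | hj
  · simp [appendRay]
  · rw [appendRay, if_neg (by omega), Nat.add_sub_cancel_left]

lemma determinedUpTo_followsRay : DeterminedUpTo (n + K) (followsRay z K n) := by
  intro X Y hXY hX j hj
  rw [← hXY _ (by omega), ← hXY n (by omega)]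
  exact hX j hj

lemma determinedUpTo_freshRay : DeterminedUpTo n (freshRay z K n) := by
  intro X Y hXY hX j hj i hi
  rw [← hXY _ hi.le, ← hXY n le_rfl]
  exact hX j hj i hi

lemma cylinder_inter_followsRay :
    cylinder n q ∩ followsRay z K n = cylinder (n + K) (appendRay z n q) := by
  ext X
  refine ⟨fun ⟨hq, hray⟩ i hi => ?_, fun h => ⟨fun i hi => ?_, fun j hj => ?_⟩⟩
  · by_cases hin : i ≤ n
    · rw [hq i hin, appendRay_of_le hin]
    · obtain ⟨j, rfl⟩ := Nat.exists_eq_add_of_le (not_le.1 hin).le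
      rw [hray j (by omega), hq n le_rfl, appendRay_add]
  · rw [h i (by omega), appendRay_of_le hi]
  · rw [h _ (by omega), h n (by omega), appendRay_add, appendRay_of_le le_rfl]

lemma appendRay_ne_of_mem_freshRay [IsLeftCancelAdd α] (hz : Function.Injective fun j : ℕ => j • z)
    (hq : q ∈ freshRay z K n) {i j : ℕ} (hj : j < K) (hi : i < n + j) :
    appendRay z n q i ≠ appendRay z n q (n + j) := by
  rw [appendRay_add]
  by_cases hin : i < n
  · rw [appendRay_of_le hin.le]
    exact hq j hj i hin
  · obtain ⟨k, rfl⟩ := Nat.exists_eq_add_of_le (not_lt.1 hin)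
    rw [appendRay_add]
    exact fun h => by have := hz (add_left_cancel h); omega

end Ray

section Dichotomy

lemma exists_frequently_eq_of_finite_image {X : ℕ → α} {T : Set ℕ} (hT : T.Infinite)
    (hfin : (X '' T).Finite) : ∃ x ∈ X '' T, ∃ᶠ n in atTop, X n = x := by
  by_contra! h
  have hcover : T ⊆ ⋃ x ∈ X '' T, {n | X n = x} :=
    fun n hn => Set.mem_biUnion (Set.mem_image_of_mem X hn) rfl
  refine hT ((hfin.biUnion fun x hx => ?_).subset hcover)
  exact Set.not_infinite.1 (mt Nat.frequently_atTop_iff_infinite.2 (not_frequently.2 (h x hx)))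

lemma nsmul_injective_of_map_ne_zero [AddMonoid α] (φ : α →+ ℝ) {z : α} (hz : φ z ≠ 0) :
    Function.Injective fun j : ℕ => j • z := fun j k h => by
  have := congrArg φ h
  simp only [map_nsmul, nsmul_eq_mul] at this
  exact_mod_cast mul_right_cancel₀ hz this

variable [AddCommGroup α] {X : ℕ → α}

/-- First visits to the sites of `V` outside a finite exceptional set are fresh-ray times. -/
lemma frequently_freshRay_of_infinite {V : Set α} {z : α} {K N : ℕ} (hV : V.Infinite)
    (hVX : V ⊆ Set.range X)
    (hN : ∀ x ∈ V, ∀ j, 0 < j → j < K → ∀ i, X i = x + j • z → i < N) :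
    ∃ᶠ n in atTop, X n ∈ V ∧ X ∈ freshRay z K n := by
  classical
  set bad : Finset α := (Finset.range K ×ˢ Finset.range N).image fun p => X p.2 - p.1 • z
  let first : α → ℕ := fun x => if h : ∃ n, X n = x then Nat.find h else 0
  have hfirst : ∀ x ∈ V, X (first x) = x ∧ ∀ i < first x, X i ≠ x := by
    intro x hx
    have h : ∃ n, X n = x := hVX hx
    simp only [first, dif_pos h]
    exact ⟨Nat.find_spec h, fun i hi => Nat.find_min h hi⟩
  have hinj : Set.InjOn first (V \ bad) := fun x hx y hy hxy => by
    rw [← (hfirst x hx.1).1, ← (hfirst y hy.1).1, hxy]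
  refine Nat.frequently_atTop_iff_infinite.2 <| ((hV.sdiff bad.finite_toSet).image hinj).mono ?_
  rintro _ ⟨x, ⟨hxV, hxbad⟩, rfl⟩
  obtain ⟨hx_eq, hx_first⟩ := hfirst x hxV
  refine ⟨by rwa [hx_eq], fun j hj i hi hXi => ?_⟩
  rw [hx_eq] at hXi
  rcases j.eq_zero_or_pos with rfl | hj0
  · exact hx_first i hi (by simpa using hXi)
  · refine hxbad (Finset.mem_image.2 ⟨(j, i), ?_, ?_⟩)
    · exact Finset.mem_product.2
        ⟨Finset.mem_range.2 hj, Finset.mem_range.2 (hN x hxV j hj0 hj i hXi)⟩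
    · simp [hXi]

/-- With `L` the liminf of the levels, sites below `L + φ z / 2` are only visited before some
time `N`, while levels below `L - φ z / 2` recur. If finitely many sites carry these returns, one
of them is visited infinitely often; otherwise `frequently_freshRay_of_infinite` applies. -/
theorem frequently_eq_or_frequently_freshRay (φ : α →+ ℝ) {z : α} (hz : φ z < 0) (K : ℕ)
    {a b : ℝ} (ha : ∀ n, a ≤ φ (X n)) (hb : ∃ᶠ n in atTop, φ (X n) ≤ b) :
    (∃ x, φ x ≤ b - φ z ∧ ∃ᶠ n in atTop, X n = x) ∨
      ∃ᶠ n in atTop, φ (X n) ≤ b - φ z ∧ X ∈ freshRay z K n := by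
  set L := liminf (fun n => φ (X n)) atTop
  have hbdd : IsBoundedUnder (· ≥ ·) atTop (fun n => φ (X n)) := isBoundedUnder_of ⟨a, ha⟩
  have hLb : L ≤ b := liminf_le_of_frequently_le hb hbdd
  obtain ⟨N, hN⟩ := eventually_atTop.1
    (eventually_lt_of_lt_liminf (show L + φ z / 2 < L by linarith) hbdd)
  set T := {n | φ (X n) < L - φ z / 2 ∧ N ≤ n}
  have hT : T.Infinite := Nat.frequently_atTop_iff_infinite.1 <|
    (frequently_lt_of_liminf_lt (IsCoboundedUnder.of_frequently_le hb) (by linarith)).and_eventually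
      (eventually_ge_atTop N)
  have hlow : ∀ x ∈ X '' T, φ x ≤ b - φ z := by
    rintro _ ⟨n, hn, rfl⟩
    linarith [hn.1]
  by_cases hfin : (X '' T).Finite
  · obtain ⟨x, hx, hfreq⟩ := exists_frequently_eq_of_finite_image hT hfin
    exact Or.inl ⟨x, hlow x hx, hfreq⟩
  refine Or.inr ((frequently_freshRay_of_infinite (N := N) hfin (Set.image_subset_range _ _)
    ?_).mono fun n hn => ⟨hlow _ hn.1, hn.2⟩)
  rintro _ ⟨n, hn, rfl⟩ j hj _ i hXi
  by_contra! hi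
  have hjz : (j : ℝ) * φ z ≤ φ z := by nlinarith [(Nat.one_le_cast (α := ℝ)).2 hj]
  have := hN i hi
  rw [hXi, map_add, map_nsmul, nsmul_eq_mul] at this
  linarith [hn.1]

end Dichotomy

end PathSpace

namespace RWRE

open PathSpace
open scoped ENNReal

variable {d : ℕ}

def level (ℓ : EuclideanSpace ℝ (Fin d)) : Zd d →+ ℝ where
  toFun x := dotl x ℓ
  map_zero' := by simp [dotl]
  map_add' x y := by simp [dotl, add_mul, Finset.sum_add_distrib]

lemma level_apply (ℓ : EuclideanSpace ℝ (Fin d)) (x : Zd d) : level ℓ x = dotl x ℓ := rfl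

lemma dotl_neg (x : Zd d) (ℓ : EuclideanSpace ℝ (Fin d)) : dotl x (-ℓ) = -dotl x ℓ := by
  simp [dotl, Finset.sum_neg_distrib]

lemma level_ne_zero {ℓ : EuclideanSpace ℝ (Fin d)} (hℓ : ℓ ≠ 0) : level ℓ ≠ 0 := by
  obtain ⟨i, hi⟩ : ∃ i, ℓ i ≠ 0 := by
    by_contra! h
    exact hℓ (PiLp.ext h)
  refine fun h => hi ?_
  have := DFunLike.congr_fun h (Pi.single i 1)
  simpa [level_apply, dotl, Pi.single_apply] using this

def envAt (x : Zd d) (ω : EnvSp d) : Zd d → ℝ := fun y => ω.1 x (x + y)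

lemma measurable_entry (x y : Zd d) : Measurable fun ω : EnvSp d => ω.1 x y :=
  (measurable_pi_apply y).comp ((measurable_pi_apply x).comp measurable_subtype_coe)

lemma measurable_envAt (x : Zd d) : Measurable (envAt (d := d) x) :=
  measurable_pi_lambda _ fun y => measurable_entry x (x + y)

lemma entry_le_one (ω : EnvSp d) (x y : Zd d) : ω.1 x y ≤ 1 :=
  le_hasSum (ω.2.2 x) y fun y' _ => ω.2.1 x y'

abbrev siteSigma (S : Set (Zd d)) : MeasurableSpace (EnvSp d) :=
  ⨆ x ∈ S, MeasurableSpace.comap (envAt x) inferInstance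

lemma siteSigma_le (S : Set (Zd d)) : siteSigma S ≤ (inferInstance : MeasurableSpace (EnvSp d)) :=
  iSup₂_le fun x _ => (measurable_envAt x).comap_le

lemma measurable_siteSigma_ofReal_entry {S : Set (Zd d)} {x : Zd d} (hx : x ∈ S) (y : Zd d) :
    Measurable[siteSigma S] fun ω : EnvSp d => ENNReal.ofReal (ω.1 x y) := by
  have hle : MeasurableSpace.comap (envAt x) inferInstance ≤ siteSigma S :=
    le_iSup₂ (f := fun x (_ : x ∈ S) => MeasurableSpace.comap (envAt x) inferInstance) x hx
  have hx_meas : Measurable[siteSigma S] (envAt x) := (comap_measurable (envAt x)).mono hle le_rfl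
  have : (fun ω : EnvSp d => ENNReal.ofReal (ω.1 x y)) =
      fun ω => ENNReal.ofReal (envAt x ω (y - x)) := by
    simp [envAt]
  rw [this]
  exact ENNReal.measurable_ofReal.comp ((measurable_pi_apply (y - x)).comp hx_meas)

variable {P : Measure (EnvSp d)}

lemma indep_siteSigma (hC1 : CondC1 P) {S T : Set (Zd d)} (hST : Disjoint S T) :
    Indep (siteSigma S) (siteSigma T) P :=
  indep_iSup_of_disjoint (fun x => (measurable_envAt x).comap_le)
    ((iIndepFun_iff_iIndep _ _ _).1 hC1.1) hST

def pathWeight (ω : EnvSp d) (p : Traj d) (n : ℕ) : ℝ≥0∞ :=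
  ∏ i ∈ Finset.range n, ENNReal.ofReal (ω.1 (p i) (p (i + 1)))

lemma measurable_pathWeight (p : Traj d) (n : ℕ) : Measurable fun ω => pathWeight ω p n :=
  Finset.measurable_prod _ fun i _ =>
    ENNReal.measurable_ofReal.comp (measurable_entry (p i) (p (i + 1)))

lemma pathWeight_appendRay (ω : EnvSp d) (z : Zd d) (n K : ℕ) (q : Traj d) :
    pathWeight ω (appendRay z n q) (n + K) =
      pathWeight ω q n * ∏ j ∈ Finset.range K,
        ENNReal.ofReal (ω.1 (q n + j • z) (q n + (j + 1) • z)) := by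
  rw [pathWeight, Finset.prod_range_add]
  congr 1
  · refine Finset.prod_congr rfl fun i hi => ?_
    have hi := Finset.mem_range.1 hi
    rw [appendRay_of_le hi.le, appendRay_of_le hi]
  · refine Finset.prod_congr rfl fun j _ => ?_
    rw [add_assoc, appendRay_add, appendRay_add]

/-- By (C1), the environment at the fresh site `p m` is independent of the past. -/
lemma lintegral_pathWeight_succ (hC1 : CondC1 P) {p : Traj d} {m : ℕ}
    (hfresh : ∀ i < m, p i ≠ p m) :
    ∫⁻ ω, pathWeight ω p (m + 1) ∂P =
      (∫⁻ ω, pathWeight ω p m ∂P) * ∫⁻ ω, ENNReal.ofReal (ω.1 (p m) (p (m + 1))) ∂P := by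
  have hind : Indep (siteSigma (p '' Set.Iio m)) (siteSigma {p m}) P :=
    indep_siteSigma hC1 <| Set.disjoint_singleton_right.2 <| by
      rintro ⟨i, hi, h⟩
      exact hfresh i hi h
  have hpast : Measurable[siteSigma (p '' Set.Iio m)] fun ω => pathWeight ω p m := by
    refine Finset.measurable_prod _ fun i hi => measurable_siteSigma_ofReal_entry ?_ _
    exact Set.mem_image_of_mem p (Finset.mem_range.1 hi)
  have hnow : Measurable[siteSigma {p m}]
      fun ω : EnvSp d => ENNReal.ofReal (ω.1 (p m) (p (m + 1))) :=
    measurable_siteSigma_ofReal_entry (S := {p m}) (Set.mem_singleton _) _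
  simp only [pathWeight, Finset.prod_range_succ] at hpast ⊢
  exact lintegral_mul_eq_lintegral_mul_lintegral_of_independent_measurableSpace
    (siteSigma_le _) (siteSigma_le _) hind hpast hnow

variable (P) in
def stepWeight (z : Zd d) : ℝ≥0∞ := ∫⁻ ω, ENNReal.ofReal (ω.1 0 z) ∂P

lemma lintegral_ofReal_step (hC1 : CondC1 P) (y z : Zd d) :
    ∫⁻ ω, ENNReal.ofReal (ω.1 y (y + z)) ∂P = stepWeight P z := by
  have hφ : Measurable fun v : Zd d → ℝ => ENNReal.ofReal (v z) :=
    ENNReal.measurable_ofReal.comp (measurable_pi_apply z)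
  simpa [stepWeight] using ((hC1.2 y).comp hφ).lintegral_eq

lemma stepWeight_le_one [IsProbabilityMeasure P] (z : Zd d) : stepWeight P z ≤ 1 :=
  (lintegral_mono fun ω => ENNReal.ofReal_le_one.2 (entry_le_one ω 0 z)).trans (by simp)

lemma ae_pos_step [IsProbabilityMeasure P] (hC1 : CondC1 P) {z : Zd d}
    (hz : P {ω | 0 < ω.1 0 z} = 1) (y : Zd d) : ∀ᵐ ω ∂P, 0 < ω.1 y (y + z) := by
  refine (mem_ae_iff_prob_eq_one (measurableSet_lt measurable_const (measurable_entry _ _))).2 ?_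
  have hφ : Measurable fun v : Zd d → ℝ => v z := measurable_pi_apply z
  have h := ((hC1.2 y).comp hφ).measure_mem_eq (measurableSet_Ioi (a := (0 : ℝ)))
  simp only [Set.preimage, Function.comp_apply, Set.mem_Ioi, zero_add] at h
  rw [h, hz]

lemma stepWeight_ne_zero [IsProbabilityMeasure P] (hC1 : CondC1 P) {z : Zd d}
    (hz : P {ω | 0 < ω.1 0 z} = 1) : stepWeight P z ≠ 0 := by
  have hmeas : Measurable fun ω : EnvSp d => ENNReal.ofReal (ω.1 0 z) :=
    ENNReal.measurable_ofReal.comp (measurable_entry _ _)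
  rw [stepWeight, Ne, lintegral_eq_zero_iff hmeas]
  intro h0
  obtain ⟨ω, h1, h2⟩ := (h0.and (ae_pos_step hC1 hz 0)).exists
  rw [zero_add] at h2
  exact (ENNReal.ofReal_pos.2 h2).ne' h1

lemma lintegral_pathWeight_appendRay (hC1 : CondC1 P) {z : Zd d}
    (hz : Function.Injective fun j : ℕ => j • z) {n K : ℕ} {q : Traj d}
    (hq : q ∈ freshRay z K n) :
    ∫⁻ ω, pathWeight ω (appendRay z n q) (n + K) ∂P =
      (∫⁻ ω, pathWeight ω q n ∂P) * stepWeight P z ^ K := by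
  induction K with
  | zero =>
    simp only [pathWeight_appendRay, Finset.prod_range_zero, mul_one, pow_zero]
  | succ K ih =>
    rw [← add_assoc, lintegral_pathWeight_succ hC1 (p := appendRay z n q) (m := n + K)
        fun i hi => appendRay_ne_of_mem_freshRay hz hq K.lt_succ_self hi,
      ih fun j hj => hq j (by omega), add_assoc, appendRay_add, appendRay_add, succ_nsmul,
      ← add_assoc, lintegral_ofReal_step hC1, pow_succ, mul_assoc]

variable {κ : Zd d → Kernel (EnvSp d) (Traj d)}

instance [IsProbabilityMeasure P] [∀ x, IsMarkovKernel (κ x)] (x : Zd d) :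
    IsProbabilityMeasure (ann P κ x) :=
  ⟨by rw [ann, Measure.bind_apply .univ (κ x).measurable.aemeasurable]; simp⟩

lemma quenched_cylinder (hκ : IsQuenched κ) (x : Zd d) (ω : EnvSp d) (n : ℕ)
    (p : Traj d) : κ x ω (cylinder n p) = (if p 0 = x then 1 else 0) * pathWeight ω p n :=
  hκ x ω n p

lemma quenched_cylinder_appendRay (hκ : IsQuenched κ) (x : Zd d) (ω : EnvSp d)
    (z : Zd d) (n K : ℕ) (q : Traj d) :
    κ x ω (cylinder (n + K) (appendRay z n q)) =
      (∏ j ∈ Finset.range K, ENNReal.ofReal (ω.1 (q n + j • z) (q n + (j + 1) • z))) *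
        κ x ω (cylinder n q) := by
  rw [quenched_cylinder hκ, quenched_cylinder hκ, pathWeight_appendRay,
    appendRay_of_le (Nat.zero_le n)]
  ring

lemma quenched_failsFrom_visits_eq_zero [∀ x, IsMarkovKernel (κ x)]
    (hκ : IsQuenched κ) {ω : EnvSp d} {z : Zd d} (hω : ∀ y, 0 < ω.1 y (y + z)) (x : Zd d)
    (K : ℕ) : κ 0 ω (failsFrom (fun n => {X | X n = x}) (followsRay z K) 0) = 0 := by
  set e := ∏ j ∈ Finset.range K, ENNReal.ofReal (ω.1 (x + j • z) (x + (j + 1) • z))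
  have he : e ≠ 0 := Finset.prod_ne_zero_iff.2 fun j _ =>
    (ENNReal.ofReal_pos.2 (by simpa only [add_assoc, ← succ_nsmul] using hω (x + j • z))).ne'
  have he_top : e ≠ ∞ := ENNReal.prod_ne_top fun _ _ => ENNReal.ofReal_ne_top
  refine measure_failsFrom_eq_zero (fun n => determinedUpTo_setOf_eval n (· = x))
    (fun _ => determinedUpTo_followsRay) he fun n E hE hEx =>
      hE.measure_diff_le determinedUpTo_followsRay.measurableSet he_top fun q hq => ?_
  rw [cylinder_inter_followsRay, quenched_cylinder_appendRay hκ, (hEx hq : q n = x)]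

lemma ann_cylinder (hκ : IsQuenched κ) (n : ℕ) (q : Traj d) :
    ann P κ 0 (cylinder n q) = (if q 0 = 0 then 1 else 0) * ∫⁻ ω, pathWeight ω q n ∂P := by
  rw [ann, Measure.bind_apply (determinedUpTo_cylinder n q).measurableSet
    (κ 0).measurable.aemeasurable, ← lintegral_const_mul _ (measurable_pathWeight q n)]
  exact lintegral_congr fun ω => quenched_cylinder hκ 0 ω n q

lemma ann_cylinder_appendRay (hκ : IsQuenched κ) (hC1 : CondC1 P) {z : Zd d}
    (hz : Function.Injective fun j : ℕ => j • z) {n K : ℕ} {q : Traj d}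
    (hq : q ∈ freshRay z K n) :
    ann P κ 0 (cylinder (n + K) (appendRay z n q)) =
      stepWeight P z ^ K * ann P κ 0 (cylinder n q) := by
  rw [ann_cylinder hκ, ann_cylinder hκ, appendRay_of_le (Nat.zero_le n),
    lintegral_pathWeight_appendRay hC1 hz hq]
  ring

theorem ann_failsFrom_eq_zero_of_subset_freshRay [IsProbabilityMeasure P]
    [∀ x, IsMarkovKernel (κ x)] (hκ : IsQuenched κ) (hC1 : CondC1 P) {z : Zd d}
    (hz : Function.Injective fun j : ℕ => j • z) (hstep : stepWeight P z ≠ 0) {K : ℕ}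
    {G : ℕ → Set (Traj d)} (hG : ∀ n, DeterminedUpTo n (G n))
    (hGfresh : ∀ n, G n ⊆ freshRay z K n) :
    ann P κ 0 (failsFrom G (followsRay z K) 0) = 0 := by
  have he_top : stepWeight P z ^ K ≠ ∞ :=
    ENNReal.pow_ne_top (ne_top_of_le_ne_top ENNReal.one_ne_top (stepWeight_le_one z))
  refine measure_failsFrom_eq_zero hG (fun _ => determinedUpTo_followsRay) (pow_ne_zero K hstep)
    fun n E hE hEG => hE.measure_diff_le determinedUpTo_followsRay.measurableSet he_top
      fun q hq => ?_
  rw [cylinder_inter_followsRay, ann_cylinder_appendRay hκ hC1 hz (hGfresh n (hEG hq))]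

theorem ann_failsFrom_visits_eq_zero [IsProbabilityMeasure P] [∀ x, IsMarkovKernel (κ x)]
    (hκ : IsQuenched κ) (hC1 : CondC1 P) {z : Zd d} (hz : P {ω | 0 < ω.1 0 z} = 1)
    (x : Zd d) (K : ℕ) : ann P κ 0 (failsFrom (fun n => {X | X n = x}) (followsRay z K) 0) = 0 := by
  have hmeas : MeasurableSet (failsFrom (fun n => {X : Traj d | X n = x}) (followsRay z K) 0) :=
    measurableSet_failsFrom (fun n => (determinedUpTo_setOf_eval n (· = x)).measurableSet)
      (fun _ => determinedUpTo_followsRay.measurableSet) 0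
  have hae : ∀ᵐ ω ∂P, ∀ y, 0 < ω.1 y (y + z) := ae_all_iff.2 (ae_pos_step hC1 hz)
  rw [ann, Measure.bind_apply hmeas (κ 0).measurable.aemeasurable]
  calc _ = ∫⁻ _, 0 ∂P := lintegral_congr_ae (hae.mono fun ω hω =>
          quenched_failsFrom_visits_eq_zero hκ hω x K)
    _ = 0 := lintegral_zero

/-- `K` steps `z` from a level at most `b - dotl z ℓ` end below `a`, so on this event every
trial fails, both at visits to a fixed low site and at low fresh-ray times. -/
theorem ann_staysAbove_returnsBelow_eq_zero [IsProbabilityMeasure P]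
    [∀ x, IsMarkovKernel (κ x)] (hκ : IsQuenched κ) (hC1 : CondC1 P)
    {ℓ : EuclideanSpace ℝ (Fin d)} {z : Zd d} (hzℓ : dotl z ℓ < 0)
    (hz : P {ω | 0 < ω.1 0 z} = 1) (a b : ℝ) :
    ann P κ 0 {X | (∀ n, a ≤ dotl (X n) ℓ) ∧ ∃ᶠ n in atTop, dotl (X n) ℓ ≤ b} = 0 := by
  set φ := level ℓ
  have hφz : φ z < 0 := hzℓ
  obtain ⟨K, hK⟩ : ∃ K : ℕ, b - φ z + K * φ z < a := by
    obtain ⟨K, hK⟩ := exists_nat_gt ((b - φ z - a) / -φ z)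
    rw [div_lt_iff₀ (neg_pos.2 hφz)] at hK
    exact ⟨K, by linarith⟩
  set G := fun n => {X : Traj d | φ (X n) ≤ b - φ z} ∩ freshRay z K n
  have hfresh : ann P κ 0 (failsFrom G (followsRay z K) 0) = 0 :=
    ann_failsFrom_eq_zero_of_subset_freshRay hκ hC1 (nsmul_injective_of_map_ne_zero φ hφz.ne)
      (stepWeight_ne_zero hC1 hz)
      (fun n => (determinedUpTo_setOf_eval n (φ · ≤ b - φ z)).inter determinedUpTo_freshRay)
      fun _ => Set.inter_subset_right
  have hvisit : ann P κ 0 (⋃ x, failsFrom (fun n => {X | X n = x}) (followsRay z K) 0) = 0 :=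
    measure_iUnion_null fun x => ann_failsFrom_visits_eq_zero hκ hC1 hz x K
  refine measure_mono_null ?_ (measure_union_null hfresh hvisit)
  rintro X ⟨ha, hb⟩
  have hfail : ∀ n, φ (X n) ≤ b - φ z → X ∉ followsRay z K n := fun n hn hray => by
    have := ha (n + K)
    rw [hray K le_rfl, ← level_apply, map_add, map_nsmul, nsmul_eq_mul] at this
    nlinarith
  rcases frequently_eq_or_frequently_freshRay φ hφz K ha hb with ⟨x, hx, hfreq⟩ | hfreq
  · exact Or.inr (Set.mem_iUnion.2 ⟨x, hfreq, fun n _ hn => hfail n (hn ▸ hx)⟩)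
  · exact Or.inl ⟨hfreq, fun n _ hn => hfail n hn.1⟩

end RWRE

lemma exists_mem_map_neg_of_closure_eq_top {α : Type*} [AddCommGroup α] {N : Set α}
    (hN : AddSubmonoid.closure N = ⊤) {φ : α →+ ℝ} (hφ : φ ≠ 0) : ∃ z ∈ N, φ z < 0 := by
  by_contra! h
  have hnonneg : ∀ x, 0 ≤ φ x := fun x =>
    AddSubmonoid.closure_induction (motive := fun x _ => 0 ≤ φ x) h (by simp)
      (fun _ _ _ _ hx hy => by simpa using add_nonneg hx hy) (hN ▸ AddSubmonoid.mem_top x)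
  exact hφ (AddMonoidHom.ext fun x => le_antisymm (by simpa using hnonneg (-x)) (hnonneg x))

lemma CondC3.exists_map_neg {d : ℕ} {P : Measure (EnvSp d)} (hC3 : CondC3 P)
    {φ : Zd d →+ ℝ} (hφ : φ ≠ 0) :
    ∃ z, φ z < 0 ∧ P {ω | 0 < ω.1 0 z} = 1 := by
  obtain ⟨N, hN, hpos⟩ := hC3
  obtain ⟨z, hzN, hz⟩ := exists_mem_map_neg_of_closure_eq_top hN hφ
  exact ⟨z, hz, hpos z hzN⟩

theorem slab_lemma_general {d : ℕ}
    (P : Measure (EnvSp d)) [IsProbabilityMeasure P]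
    (κ : Zd d → Kernel (EnvSp d) (Traj d)) [∀ x, IsMarkovKernel (κ x)]
    (hκ : IsQuenched κ)
    (hC1 : CondC1 P) (hC3 : CondC3 P)
    (ℓ : EuclideanSpace ℝ (Fin d)) (hℓ : ‖ℓ‖ = 1)
    (a b : ℝ) :
    ann P κ 0 {X | (∃ᶠ n in atTop, dotl (X n) ℓ ∈ Set.Icc a b) ∧
      ¬ ((∃ n, dotl (X n) ℓ < a) ∧ ∃ m, b < dotl (X m) ℓ)} = 0 := by
  have hℓ0 : ℓ ≠ 0 := by
    rintro rfl
    simp at hℓ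
  obtain ⟨z, hzℓ, hz⟩ := hC3.exists_map_neg (RWRE.level_ne_zero hℓ0)
  obtain ⟨z', hz'ℓ, hz'⟩ := hC3.exists_map_neg (RWRE.level_ne_zero (neg_ne_zero.2 hℓ0))
  refine measure_mono_null ?_ (measure_union_null
    (RWRE.ann_staysAbove_returnsBelow_eq_zero hκ hC1 hzℓ hz a b)
    (RWRE.ann_staysAbove_returnsBelow_eq_zero hκ hC1 hz'ℓ hz' (-b) (-a)))
  rintro X ⟨hslab, hboth⟩
  simp only [not_and_or, not_exists, not_lt] at hboth
  rcases hboth with habove_a | hbelow_b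
  · exact Or.inl ⟨habove_a, hslab.mono fun n hn => hn.2⟩
  · refine Or.inr ⟨fun n => ?_, hslab.mono fun n hn => ?_⟩
    · rw [RWRE.dotl_neg]
      linarith [hbelow_b n]
    · rw [RWRE.dotl_neg]
      linarith [hn.1]

/-- Slab lemma (bounded-jump version of Zerner–Merkl Lemma 4): `P⁰`-a.s., it is
impossible to visit the slab `{x : a ≤ x · ℓ ≤ b}` infinitely often without visiting
both neighboring half-spaces. -/
theorem slab_lemma {d : ℕ}
    (P : Measure (EnvSp d)) [IsProbabilityMeasure P]
    (κ : Zd d → Kernel (EnvSp d) (Traj d)) [∀ x, IsMarkovKernel (κ x)]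
    (hκ : IsQuenched κ)
    (hC1 : CondC1 P) (R : ℝ) (hC2 : CondC2 P R) (hC3 : CondC3 P)
    (ℓ : EuclideanSpace ℝ (Fin d)) (hℓ : ‖ℓ‖ = 1)
    (a b : ℝ) (hab : a ≤ b) :
    ann P κ 0 {X | (∃ᶠ n in atTop, dotl (X n) ℓ ∈ Set.Icc a b) ∧
      ¬ ((∃ n, dotl (X n) ℓ < a) ∧ ∃ m, b < dotl (X m) ℓ)} = 0 :=
  slab_lemma_general P κ hκ hC1 hC3 ℓ hℓ a b
end
end
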